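/- arXiv:0909.1278 — 9 statements merged into one kernel-verified Lean document; each statement's English description precedes it below -/
import Mathlib

section
/- Let p ≥ 2, f ≥ 1, and N ≥ 1 be integers with (p^f − 1) ∣ N. Let (k_i)_{i∈ℤ/fℤ} and (r_i)_{i∈ℤ/fℤ} be integers satisfying k_{i+1} ≡ p(k_i + r_i) (mod N) for all i (indices modulo f). For each i ∈ ℤ/fℤ define s_i := p(p^{f−1} r_i + p^{f−2} r_{i+1} + ⋯ + r_{i+f−1})/(p^f − 1). Then each s_i is an integer, s_{i+1} = p(s_i − r_i) for all i, and k_i + s_i ≡ p^i (k_0 + s_0) (mod N) for all 0 ≤ i ≤ f−1. -/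
/-- The sum `p^{f−1} r_i + p^{f−2} r_{i+1} + ⋯ + r_{i+f−1}` (indices mod `f`). -/
def Ssum (p f : ℕ) (r : ZMod f → ℤ) (i : ℕ) : ℤ :=
  ∑ j ∈ Finset.range f, (p : ℤ) ^ (f - 1 - j) * r ((i : ZMod f) + (j : ZMod f))

/-- `s_i := p(p^{f−1} r_i + p^{f−2} r_{i+1} + ⋯ + r_{i+f−1})/(p^f − 1)` (integer division). -/
def sQuot (p f : ℕ) (r : ZMod f → ℤ) (i : ℕ) : ℤ :=
  (p : ℤ) * Ssum p f r i / ((p : ℤ) ^ f - 1)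

/-- with `k_{i+1} ≡ p(k_i + r_i) (mod N)` and `(p^f−1) ∣ N`, each `s_i` is an
integer (i.e. `p^f−1` divides `p` times the corresponding sum), `s_{i+1} = p(s_i − r_i)`
for all `i`, and `k_i + s_i ≡ p^i (k_0 + s_0) (mod N)` for `0 ≤ i ≤ f−1`. -/
theorem stmt_1 (p f N : ℕ) (hp : 2 ≤ p) (hf : 1 ≤ f) (hN : 1 ≤ N)
    (hdvd : ((p : ℤ) ^ f - 1) ∣ (N : ℤ))
    (k r : ZMod f → ℤ)
    (hcong : ∀ i : ZMod f, k (i + 1) ≡ (p : ℤ) * (k i + r i) [ZMOD (N : ℤ)]) :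
    (∀ i : ℕ, ((p : ℤ) ^ f - 1) ∣ (p : ℤ) * Ssum p f r i) ∧
    (∀ i : ℕ, sQuot p f r (i + 1) = (p : ℤ) * (sQuot p f r i - r (i : ZMod f))) ∧
    (∀ i : ℕ, i < f →
      k (i : ZMod f) + sQuot p f r i ≡ (p : ℤ) ^ i * (k 0 + sQuot p f r 0) [ZMOD (N : ℤ)]) := by
  have hp2 : (2:ℤ) ≤ (p:ℤ) := by exact_mod_cast hp
  have hD0 : (0:ℤ) < (p:ℤ)^f - 1 := by
    have h1 : (2:ℤ) = 2^1 := (pow_one 2).symm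
    have h2 : (2:ℤ)^1 ≤ (2:ℤ)^f := pow_le_pow_right₀ (by norm_num) hf
    have h3 : (2:ℤ)^f ≤ (p:ℤ)^f := pow_le_pow_left₀ (by norm_num) hp2 f
    linarith
  have hDne : ((p:ℤ)^f - 1) ≠ 0 := ne_of_gt hD0
  -- Key lemma A : iterate the congruence n times
  have keyA : ∀ (n : ℕ) (i : ZMod f),
      k (i + (n:ZMod f)) ≡ (p:ℤ)^n * k i
        + ∑ t ∈ Finset.range n, (p:ℤ)^(n - t) * r (i + (t:ZMod f)) [ZMOD (N:ℤ)] := by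
    intro n
    induction n with
    | zero => intro i; simp
    | succ n ih =>
      intro i
      have h1 := hcong (i + (n:ZMod f))
      have hstep : k (i + ((n+1 : ℕ):ZMod f))
          ≡ (p:ℤ) * (k (i + (n:ZMod f)) + r (i + (n:ZMod f))) [ZMOD (N:ℤ)] := by
        have hc : (((n+1:ℕ)):ZMod f) = (n:ZMod f) + 1 := by push_cast; ring
        rw [hc, ← add_assoc]; exact h1
      calc k (i + ((n+1:ℕ):ZMod f))
          ≡ (p:ℤ) * (k (i + (n:ZMod f)) + r (i + (n:ZMod f))) [ZMOD (N:ℤ)] := hstep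
        _ ≡ (p:ℤ) * ((p:ℤ)^n * k i
              + ∑ t ∈ Finset.range n, (p:ℤ)^(n-t) * r (i + (t:ZMod f))
              + r (i + (n:ZMod f))) [ZMOD (N:ℤ)] :=
            Int.ModEq.mul_left _ (Int.ModEq.add_right _ (ih i))
        _ = (p:ℤ)^(n+1) * k i
              + ∑ t ∈ Finset.range (n+1), (p:ℤ)^(n+1-t) * r (i + (t:ZMod f)) := by
            rw [Finset.sum_range_succ, mul_add, mul_add, Finset.mul_sum]
            have hs : ∀ t ∈ Finset.range n,
                (p:ℤ) * ((p:ℤ)^(n-t) * r (i + (t:ZMod f)))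
                  = (p:ℤ)^(n+1-t) * r (i + (t:ZMod f)) := by
              intro t ht
              have ht' : t < n := Finset.mem_range.mp ht
              have e : n + 1 - t = (n - t) + 1 := by omega
              rw [e, pow_succ]; ring
            rw [Finset.sum_congr rfl hs]
            have hn : n + 1 - n = 1 := by omega
            rw [hn, pow_one, pow_succ]
            ring
  -- divisibility
  have keyD : ∀ i : ℕ, ((p:ℤ)^f - 1) ∣ (p:ℤ) * Ssum p f r i := by
    intro i
    have h := keyA f (i : ZMod f)
    have hfz : ((f:ℕ):ZMod f) = 0 := ZMod.natCast_self f
    rw [hfz, add_zero] at h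
    have hsum : ∑ t ∈ Finset.range f, (p:ℤ)^(f-t) * r ((i:ZMod f) + (t:ZMod f))
        = (p:ℤ) * Ssum p f r i := by
      rw [Ssum, Finset.mul_sum]
      apply Finset.sum_congr rfl
      intro t ht
      have ht' : t < f := Finset.mem_range.mp ht
      have e : f - t = (f - 1 - t) + 1 := by omega
      rw [e, pow_succ]; ring
    rw [hsum] at h
    have hN' : (N:ℤ) ∣ ((p:ℤ)^f * k (i:ZMod f) + (p:ℤ) * Ssum p f r i - k (i:ZMod f)) :=
      Int.ModEq.dvd h
    have hD' := dvd_trans hdvd hN'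
    have hkey : (p:ℤ) * Ssum p f r i
        = ((p:ℤ)^f * k (i:ZMod f) + (p:ℤ) * Ssum p f r i - k (i:ZMod f))
          - ((p:ℤ)^f - 1) * k (i:ZMod f) := by ring
    rw [hkey]
    exact dvd_sub hD' (Dvd.intro _ rfl)
  -- recurrence for Ssum
  have keyB : ∀ i : ℕ, Ssum p f r (i+1)
      = (p:ℤ) * Ssum p f r i - ((p:ℤ)^f - 1) * r (i:ZMod f) := by
    intro i
    obtain ⟨m, rfl⟩ : ∃ m, f = m + 1 := ⟨f - 1, by omega⟩
    have hc : ∀ j : ℕ, ((i+1:ℕ):ZMod (m+1)) + (j:ZMod (m+1))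
        = (i:ZMod (m+1)) + ((j+1:ℕ):ZMod (m+1)) := by
      intro j; push_cast; ring
    have hlast : ((i+1:ℕ):ZMod (m+1)) + (m:ZMod (m+1)) = (i:ZMod (m+1)) := by
      rw [hc m, ZMod.natCast_self, add_zero]
    have hL : Ssum p (m+1) r (i+1) =
        (∑ j ∈ Finset.range m, (p:ℤ)^(m-j) * r ((i:ZMod (m+1)) + ((j+1:ℕ):ZMod (m+1))))
          + r (i:ZMod (m+1)) := by
      rw [Ssum, Finset.sum_range_succ]
      congr 1
      · apply Finset.sum_congr rfl
        intro j hj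
        have hj' : j < m := Finset.mem_range.mp hj
        have e : m + 1 - 1 - j = m - j := by omega
        rw [e, hc j]
      · have e : m + 1 - 1 - m = 0 := by omega
        rw [e, pow_zero, one_mul, hlast]
    have hR : (p:ℤ) * Ssum p (m+1) r i =
        (∑ j ∈ Finset.range m, (p:ℤ)^(m-j) * r ((i:ZMod (m+1)) + ((j+1:ℕ):ZMod (m+1))))
          + (p:ℤ)^(m+1) * r (i:ZMod (m+1)) := by
      rw [Ssum, Finset.sum_range_succ', mul_add, Finset.mul_sum]
      congr 1
      · apply Finset.sum_congr rfl
        intro j hj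
        have hj' : j < m := Finset.mem_range.mp hj
        have e : m + 1 - 1 - (j + 1) = m - j - 1 := by omega
        have e2 : (m - j - 1) + 1 = m - j := by omega
        rw [e, ← mul_assoc, ← pow_succ', e2]
      · have e : m + 1 - 1 - 0 = m := by omega
        rw [e, Nat.cast_zero, add_zero, ← mul_assoc, ← pow_succ']
    rw [hL, hR]; ring
  -- recurrence for sQuot
  have keyS : ∀ i : ℕ, sQuot p f r (i+1) = (p:ℤ) * (sQuot p f r i - r (i:ZMod f)) := by
    intro i
    obtain ⟨q, hq⟩ := keyD i
    have h1 : sQuot p f r i = q := by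
      rw [sQuot, hq, Int.mul_ediv_cancel_left _ hDne]
    have h2 : (p:ℤ) * Ssum p f r (i+1)
        = ((p:ℤ)^f - 1) * ((p:ℤ) * (q - r (i:ZMod f))) := by
      rw [keyB i, mul_sub, hq]; ring
    have h3 : sQuot p f r (i+1) = (p:ℤ) * (q - r (i:ZMod f)) := by
      rw [sQuot, h2, Int.mul_ediv_cancel_left _ hDne]
    rw [h3, h1]
  -- the congruence for all i
  have keyC : ∀ i : ℕ, k (i:ZMod f) + sQuot p f r i
      ≡ (p:ℤ)^i * (k 0 + sQuot p f r 0) [ZMOD (N:ℤ)] := by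
    intro i
    induction i with
    | zero => simp
    | succ n ih =>
      have h1 := hcong (n : ZMod f)
      have hcast : (((n+1:ℕ)):ZMod f) = (n:ZMod f) + 1 := by push_cast; ring
      have h2 : k ((n+1:ℕ):ZMod f) + sQuot p f r (n+1)
          ≡ (p:ℤ) * (k (n:ZMod f) + sQuot p f r n) [ZMOD (N:ℤ)] := by
        rw [hcast, keyS n]
        calc k ((n:ZMod f) + 1) + (p:ℤ) * (sQuot p f r n - r (n:ZMod f))
            ≡ (p:ℤ) * (k (n:ZMod f) + r (n:ZMod f))
              + (p:ℤ) * (sQuot p f r n - r (n:ZMod f)) [ZMOD (N:ℤ)] :=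
              Int.ModEq.add_right _ h1
          _ = (p:ℤ) * (k (n:ZMod f) + sQuot p f r n) := by ring
      calc k ((n+1:ℕ):ZMod f) + sQuot p f r (n+1)
          ≡ (p:ℤ) * (k (n:ZMod f) + sQuot p f r n) [ZMOD (N:ℤ)] := h2
        _ ≡ (p:ℤ) * ((p:ℤ)^n * (k 0 + sQuot p f r 0)) [ZMOD (N:ℤ)] :=
            Int.ModEq.mul_left _ ih
        _ = (p:ℤ)^(n+1) * (k 0 + sQuot p f r 0) := by ring
  exact ⟨keyD, keyS, fun i _ => keyC i⟩
end

section
/- Let p be an odd prime and f ≥ 1, e ≥ 1 integers, and let c_0, …, c_{2f−1} be integers with 0 ≤ c_i ≤ p−1 (indices modulo 2f). Let J ⊆ ℤ/2fℤ and let x_0, …, x_{2f−1} be any integers. For each i set D_i := Σ_{k=1}^{f} p^{f−k}(c_{i+k+f} − c_{i+k}), and define r_i := (p^{2f}−1)x_i if i and i+1 are both in J or both not in J; r_i := (p^{2f}−1)x_i + (p^f−1)D_i if i ∈ J and i+1 ∉ J; and r_i := (p^{2f}−1)x_i − (p^f−1)D_i if i ∉ J and i+1 ∈ J. Set k_0 :=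 C if 0 ∈ J and k_0 := p^f·C if 0 ∉ J. Then (p^{2f}−1) divides p·(p^{2f−1} r_0 + p^{2f−2} r_1 + ⋯ + r_{2f−1}), and, writing s_0 for the quotient, k_0 + s_0 ≡ Ψ(J,x) (mod p^{2f}−1). -/
/-- `C := Σ_{i=0}^{2f−1} p^{2f−i} c_i`, encoding the character `χ̄ = ∏ η_i^{c_i}`. -/
def Cconst (p f : ℕ) (c : ZMod (2 * f) → ℤ) : ℤ :=
  ∑ i ∈ Finset.range (2 * f), (p : ℤ) ^ (2 * f - i) * c (i : ZMod (2 * f))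

/-- `Ψ(J,x) := Σ_{i∈J} p^{2f−i} c_i + Σ_{i∉J} p^{2f−i} c_{i+f} + Σ_i p^{2f−i} x_i`. -/
def Psi (p f : ℕ) (c : ZMod (2 * f) → ℤ) (J : Finset (ZMod (2 * f)))
    (x : ZMod (2 * f) → ℤ) : ℤ :=
  (∑ i ∈ Finset.range (2 * f),
      if (i : ZMod (2 * f)) ∈ J then (p : ℤ) ^ (2 * f - i) * c (i : ZMod (2 * f))
      else (p : ℤ) ^ (2 * f - i) * c ((i : ZMod (2 * f)) + (f : ZMod (2 * f)))) +
  ∑ i ∈ Finset.range (2 * f), (p : ℤ) ^ (2 * f - i) * x (i : ZMod (2 * f))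

/-- `D_i := Σ_{k=1}^{f} p^{f−k}(c_{i+k+f} − c_{i+k})` (indices mod `2f`). -/
def Dsum (p f : ℕ) (c : ZMod (2 * f) → ℤ) (i : ZMod (2 * f)) : ℤ :=
  ∑ k ∈ Finset.Icc 1 f,
    (p : ℤ) ^ (f - k) *
      (c (i + (k : ZMod (2 * f)) + (f : ZMod (2 * f))) - c (i + (k : ZMod (2 * f))))

/-- `r_i`, defined by cases according to the membership of `i`, `i+1` in `J`. -/
def rdef (p f : ℕ) (c : ZMod (2 * f) → ℤ) (J : Finset (ZMod (2 * f)))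
    (x : ZMod (2 * f) → ℤ) (i : ZMod (2 * f)) : ℤ :=
  if (i ∈ J ↔ i + 1 ∈ J) then ((p : ℤ) ^ (2 * f) - 1) * x i
  else if i ∈ J then ((p : ℤ) ^ (2 * f) - 1) * x i + ((p : ℤ) ^ f - 1) * Dsum p f c i
  else ((p : ℤ) ^ (2 * f) - 1) * x i - ((p : ℤ) ^ f - 1) * Dsum p f c i


section Stmt2Aux

/-- Sum over `range N` of a `ZMod N`-indexed function equals sum over `univ`. -/
lemma sum_range_zmod {N : ℕ} [NeZero N] (h : ZMod N → ℤ) :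
    ∑ i ∈ Finset.range N, h (i : ZMod N) = ∑ j : ZMod N, h j := by
  refine Finset.sum_nbij' (fun a => (a : ZMod N)) (fun b => b.val) ?_ ?_ ?_ ?_ ?_
  · intro a _; exact Finset.mem_univ _
  · intro b _; exact Finset.mem_range.mpr (ZMod.val_lt b)
  · intro a ha; exact ZMod.val_cast_of_lt (Finset.mem_range.mp ha)
  · intro b _; exact ZMod.natCast_rightInverse b
  · intro a _; rfl

/-- Powers of an element of order dividing `N` depend only on exponent mod `N`. -/
lemma pow_congr_mod {M : Type*} [Monoid M] (P : M) (N : ℕ) (hP : P ^ N = 1)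
    {a b : ℕ} (h : a % N = b % N) : P ^ a = P ^ b := by
  calc P ^ a = (P ^ N) ^ (a / N) * P ^ (a % N) := by
        rw [← pow_mul, ← pow_add, Nat.div_add_mod]
    _ = (P ^ N) ^ (b / N) * P ^ (b % N) := by rw [hP, h]; simp
    _ = P ^ b := by rw [← pow_mul, ← pow_add, Nat.div_add_mod]

/-- The `g` function: `g j = p^{2f - v(j)} (c_j - c_{j+f})`. -/
def gfun (p f : ℕ) (c : ZMod (2 * f) → ℤ) (j : ZMod (2 * f)) : ℤ :=
  (p : ℤ) ^ (2 * f - j.val) * (c j - c (j + (f : ZMod (2 * f))))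

/-- The quotient function `m`. -/
def mfun (p f : ℕ) (c : ZMod (2 * f) → ℤ) (j : ZMod (2 * f)) : ℤ :=
  if j = 0 then ((p : ℤ) ^ f - 1) * Dsum p f c 0 + (c 0 - c (f : ZMod (2 * f)))
  else gfun p f c j

/-- `a j = p^{2f - v(j)} (p^f - 1) D_j`. -/
def afun (p f : ℕ) (c : ZMod (2 * f) → ℤ) (j : ZMod (2 * f)) : ℤ :=
  (p : ℤ) ^ (2 * f - j.val) * (((p : ℤ) ^ f - 1) * Dsum p f c j)

/-- Generic weighted sum over `univ`. -/
def Xsum (p f : ℕ) [NeZero (2 * f)] (w : ZMod (2 * f) → ℤ) : ℤ :=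
  ∑ j : ZMod (2 * f), (p : ℤ) ^ (2 * f - j.val) * w j

end Stmt2Aux
/-- The key recurrence: `p · D_{j-1} = D_j + (p^f + 1)(c_{j+f} - c_j)`. -/
lemma Drec (p f : ℕ) (c : ZMod (2 * f) → ℤ) (hf : 1 ≤ f) (j : ZMod (2 * f)) :
    (p : ℤ) * Dsum p f c (j - 1) =
      Dsum p f c j + ((p : ℤ) ^ f + 1) * (c (j + (f : ZMod (2 * f))) - c j) := by
  have hff : (f : ZMod (2 * f)) + (f : ZMod (2 * f)) = 0 := by
    rw [← Nat.cast_add, show f + f = 2 * f by ring, ZMod.natCast_self]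
  -- the shifted summand
  set u : ℕ → ℤ := fun k =>
    (p : ℤ) ^ (f - k) *
      (c (j + (k : ZMod (2 * f)) + (f : ZMod (2 * f))) - c (j + (k : ZMod (2 * f)))) with hu
  have h1 : (p : ℤ) * Dsum p f c (j - 1) = ∑ k ∈ Finset.Icc 0 (f - 1), u k := by
    rw [Dsum, Finset.mul_sum]
    refine Finset.sum_nbij' (fun k => k - 1) (fun k => k + 1) ?_ ?_ ?_ ?_ ?_
    · intro a ha; simp only [Finset.mem_Icc] at *; omega
    · intro b hb; simp only [Finset.mem_Icc] at *; omega
    · intro a ha; simp only [Finset.mem_Icc] at ha; show a - 1 + 1 = a; omega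
    · intro b hb; show b + 1 - 1 = b; omega
    · intro a ha
      simp only [Finset.mem_Icc] at ha
      have hcast : ((a - 1 : ℕ) : ZMod (2 * f)) = (a : ZMod (2 * f)) - 1 := by
        rw [Nat.cast_sub ha.1, Nat.cast_one]
      have hexp : f - (a - 1) = (f - a) + 1 := by omega
      rw [hu]
      simp only [hcast, hexp, pow_succ]
      have harg1 : j - 1 + (a : ZMod (2 * f)) + (f : ZMod (2 * f)) =
          j + ((a : ZMod (2 * f)) - 1) + (f : ZMod (2 * f)) := by ring
      have harg2 : j - 1 + (a : ZMod (2 * f)) = j + ((a : ZMod (2 * f)) - 1) := by ring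
      rw [harg1, harg2]; ring
  have h2 : Finset.Icc 0 (f - 1) = insert 0 (Finset.Icc 1 (f - 1)) := by
    ext k; simp only [Finset.mem_Icc, Finset.mem_insert]; omega
  have h3 : Finset.Icc 1 f = insert f (Finset.Icc 1 (f - 1)) := by
    ext k; simp only [Finset.mem_Icc, Finset.mem_insert]; omega
  have h0mem : (0 : ℕ) ∉ Finset.Icc 1 (f - 1) := by simp
  have hfmem : f ∉ Finset.Icc 1 (f - 1) := by simp only [Finset.mem_Icc]; omega
  have hDj : Dsum p f c j = u f + ∑ k ∈ Finset.Icc 1 (f - 1), u k := by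
    rw [Dsum, h3, Finset.sum_insert hfmem]
  have hu0 : u 0 = (p : ℤ) ^ f * (c (j + (f : ZMod (2 * f))) - c j) := by
    simp [hu]
  have huf : u f = c j - c (j + (f : ZMod (2 * f))) := by
    have : j + (f : ZMod (2 * f)) + (f : ZMod (2 * f)) = j := by
      rw [add_assoc, hff, add_zero]
    simp [hu, this]
  rw [h1, h2, Finset.sum_insert h0mem, hDj, hu0, huf]
  ring
/-- Key per-element identity: `a_j - a_{j-1} = (p^{2f} - 1) m_j`. -/
lemma akey (p f : ℕ) (c : ZMod (2 * f) → ℤ) (hf : 1 ≤ f) (j : ZMod (2 * f)) :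
    afun p f c j - afun p f c (j - 1) = ((p : ℤ) ^ (2 * f) - 1) * mfun p f c j := by
  haveI : NeZero (2 * f) := ⟨by omega⟩
  have h2f : (p : ℤ) ^ (2 * f) = (p : ℤ) ^ f * (p : ℤ) ^ f := by
    rw [← pow_add]; congr 1; ring
  by_cases h0 : j = 0
  · subst h0
    have hm1cast : ((2 * f - 1 : ℕ) : ZMod (2 * f)) = 0 - 1 := by
      rw [Nat.cast_sub (by omega), Nat.cast_one, ZMod.natCast_self]
    have hval0 : (0 : ZMod (2 * f)).val = 0 := ZMod.val_zero
    have hvalm1 : ((0 : ZMod (2 * f)) - 1).val = 2 * f - 1 := by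
      rw [← hm1cast, ZMod.val_cast_of_lt (by omega)]
    have hD := Drec p f c hf 0
    rw [zero_add] at hD
    rw [afun, afun, mfun, if_pos rfl, hval0, hvalm1, Nat.sub_zero,
      show 2 * f - (2 * f - 1) = 1 by omega, pow_one, h2f]
    linear_combination (-(p : ℤ) ^ f + 1) * hD
  · have hv1 : 1 ≤ j.val := by
      rcases Nat.eq_zero_or_pos j.val with h | h
      · exact absurd ((ZMod.val_eq_zero j).mp h) h0
      · exact h
    have hvlt : j.val < 2 * f := ZMod.val_lt j
    have hj1cast : ((j.val - 1 : ℕ) : ZMod (2 * f)) = j - 1 := by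
      rw [Nat.cast_sub hv1, Nat.cast_one, ZMod.natCast_rightInverse j]
    have hvalj1 : (j - 1).val = j.val - 1 := by
      rw [← hj1cast, ZMod.val_cast_of_lt (by omega)]
    have hD := Drec p f c hf j
    rw [afun, afun, mfun, if_neg h0, gfun, hvalj1,
      show 2 * f - (j.val - 1) = (2 * f - j.val) + 1 by omega, pow_succ, h2f]
    linear_combination (-(p : ℤ) ^ (2 * f - j.val) * ((p : ℤ) ^ f - 1)) * hD
/-- Cyclic telescoping over `ZMod N`. -/
lemma telescope {N : ℕ} [NeZero N] (J : Finset (ZMod N)) (a : ZMod N → ℤ) :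
    ∑ j : ZMod N, ((if j ∈ J then (1 : ℤ) else 0) - (if j + 1 ∈ J then 1 else 0)) * a j =
      ∑ j ∈ J, (a j - a (j - 1)) := by
  have h1 : ∀ j : ZMod N,
      ((if j ∈ J then (1 : ℤ) else 0) - (if j + 1 ∈ J then 1 else 0)) * a j =
        (if j ∈ J then a j else 0) - (if j + 1 ∈ J then a j else 0) := by
    intro j; by_cases hj : j ∈ J <;> by_cases hj1 : j + 1 ∈ J <;> simp [hj, hj1]
  rw [Finset.sum_congr rfl (fun j _ => h1 j), Finset.sum_sub_distrib]
  have h2 : ∑ j : ZMod N, (if j + 1 ∈ J then a j else 0) =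
      ∑ j : ZMod N, (if j ∈ J then a (j - 1) else 0) := by
    apply Fintype.sum_equiv (Equiv.addRight (1 : ZMod N))
    intro j
    simp [Equiv.coe_addRight]
  rw [h2, ← Finset.sum_sub_distrib]
  have h3 : ∀ j : ZMod N, ((if j ∈ J then a j else 0) - (if j ∈ J then a (j - 1) else 0)) =
      (if j ∈ J then a j - a (j - 1) else 0) := by
    intro j; by_cases hj : j ∈ J <;> simp [hj]
  rw [Finset.sum_congr rfl (fun j _ => h3 j)]
  classical
  exact Fintype.sum_ite_mem J _

/-- Decomposition of `rdef`. -/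
lemma rdef_eq (p f : ℕ) (c : ZMod (2 * f) → ℤ) (J : Finset (ZMod (2 * f)))
    (x : ZMod (2 * f) → ℤ) (j : ZMod (2 * f)) :
    rdef p f c J x j = ((p : ℤ) ^ (2 * f) - 1) * x j +
      ((if j ∈ J then (1 : ℤ) else 0) - (if j + 1 ∈ J then 1 else 0)) *
        (((p : ℤ) ^ f - 1) * Dsum p f c j) := by
  rw [rdef]
  by_cases hj : j ∈ J <;> by_cases hj1 : j + 1 ∈ J <;>
    simp [hj, hj1] <;> ring
/-- The master identity: `p·S = (p^{2f}-1)(X' + Σ_{j∈J} m_j)`. -/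
lemma key_sum (p f : ℕ) [NeZero (2 * f)] (c : ZMod (2 * f) → ℤ) (hf : 1 ≤ f)
    (J : Finset (ZMod (2 * f))) (x : ZMod (2 * f) → ℤ) :
    (p : ℤ) * ∑ i ∈ Finset.range (2 * f),
        (p : ℤ) ^ (2 * f - 1 - i) * rdef p f c J x (i : ZMod (2 * f)) =
      ((p : ℤ) ^ (2 * f) - 1) * (Xsum p f x + ∑ j ∈ J, mfun p f c j) := by
  calc (p : ℤ) * ∑ i ∈ Finset.range (2 * f),
          (p : ℤ) ^ (2 * f - 1 - i) * rdef p f c J x (i : ZMod (2 * f))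
      = ∑ i ∈ Finset.range (2 * f),
          (fun j : ZMod (2 * f) => (p : ℤ) ^ (2 * f - j.val) * rdef p f c J x j)
            (i : ZMod (2 * f)) := by
        rw [Finset.mul_sum]
        refine Finset.sum_congr rfl fun i hi => ?_
        have hi' := Finset.mem_range.mp hi
        simp only [ZMod.val_cast_of_lt hi']
        rw [show 2 * f - i = (2 * f - 1 - i) + 1 by omega, pow_succ]
        ring
    _ = ∑ j : ZMod (2 * f), (p : ℤ) ^ (2 * f - j.val) * rdef p f c J x j :=
        sum_range_zmod (fun j => (p : ℤ) ^ (2 * f - j.val) * rdef p f c J x j)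
    _ = ∑ j : ZMod (2 * f),
          (((p : ℤ) ^ (2 * f) - 1) * ((p : ℤ) ^ (2 * f - j.val) * x j) +
            ((if j ∈ J then (1 : ℤ) else 0) - (if j + 1 ∈ J then 1 else 0)) *
              afun p f c j) := by
        refine Finset.sum_congr rfl fun j _ => ?_
        rw [rdef_eq p f c J x j, afun]
        ring
    _ = ((p : ℤ) ^ (2 * f) - 1) * Xsum p f x +
          ∑ j ∈ J, (afun p f c j - afun p f c (j - 1)) := by
        rw [Finset.sum_add_distrib, telescope J (afun p f c), ← Finset.mul_sum, Xsum]
    _ = ((p : ℤ) ^ (2 * f) - 1) * Xsum p f x +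
          ∑ j ∈ J, ((p : ℤ) ^ (2 * f) - 1) * mfun p f c j := by
        rw [Finset.sum_congr rfl fun j _ => akey p f c hf j]
    _ = ((p : ℤ) ^ (2 * f) - 1) * (Xsum p f x + ∑ j ∈ J, mfun p f c j) := by
        rw [← Finset.mul_sum]; ring
/-- Exact identity: `(p^f-1) D_0 = (p^f-1) C - (p^{2f}-1)((p^f-1)c_0 + F_0)`. -/
lemma D0_identity (p f : ℕ) (c : ZMod (2 * f) → ℤ) (hf : 1 ≤ f) :
    ((p : ℤ) ^ f - 1) * Dsum p f c 0 =
      ((p : ℤ) ^ f - 1) * Cconst p f c -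
        ((p : ℤ) ^ (2 * f) - 1) *
          (((p : ℤ) ^ f - 1) * c 0 +
            ∑ k ∈ Finset.Icc 1 f, (p : ℤ) ^ (f - k) * c (k : ZMod (2 * f))) := by
  set F0 : ℤ := ∑ k ∈ Finset.Icc 1 f, (p : ℤ) ^ (f - k) * c (k : ZMod (2 * f)) with hF0
  set G0 : ℤ :=
    ∑ k ∈ Finset.Icc 1 f, (p : ℤ) ^ (f - k) * c ((k : ZMod (2 * f)) + (f : ZMod (2 * f)))
    with hG0
  set h : ℕ → ℤ := fun i => (p : ℤ) ^ (2 * f - i) * c (i : ZMod (2 * f)) with hh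
  set E0 : ℤ := ∑ k ∈ Finset.Icc 1 (2 * f), h k with hE0def
  -- E0 = C - (p^{2f}-1) c 0
  have hE0C : E0 = Cconst p f c - ((p : ℤ) ^ (2 * f) - 1) * c 0 := by
    obtain ⟨g, hg⟩ : ∃ g, 2 * f = g + 1 := ⟨2 * f - 1, by omega⟩
    have halt : E0 = ∑ i ∈ Finset.range (2 * f), h (i + 1) := by
      rw [hE0def]
      refine Finset.sum_nbij' (fun k => k - 1) (fun i => i + 1) ?_ ?_ ?_ ?_ ?_
      · intro a ha; simp only [Finset.mem_Icc, Finset.mem_range] at *; omega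
      · intro b hb; simp only [Finset.mem_Icc, Finset.mem_range] at *; omega
      · intro a ha; simp only [Finset.mem_Icc] at ha; show a - 1 + 1 = a; omega
      · intro b _; show b + 1 - 1 = b; omega
      · intro a ha; simp only [Finset.mem_Icc] at ha
        show h a = h (a - 1 + 1)
        rw [Nat.sub_add_cancel ha.1]
    have hC : Cconst p f c = (∑ i ∈ Finset.range g, h (i + 1)) + h 0 := by
      rw [Cconst, show (∑ i ∈ Finset.range (2 * f),
        (p : ℤ) ^ (2 * f - i) * c (i : ZMod (2 * f))) = ∑ i ∈ Finset.range (2 * f), h i from rfl,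
        hg, Finset.sum_range_succ']
    have hE : E0 = (∑ i ∈ Finset.range g, h (i + 1)) + h (g + 1) := by
      rw [halt, hg, Finset.sum_range_succ]
    have hgp1 : h (g + 1) = c 0 := by
      rw [hh]; simp only [← hg, Nat.sub_self, pow_zero, one_mul, ZMod.natCast_self]
    have hzero : h 0 = (p : ℤ) ^ (2 * f) * c 0 := by
      rw [hh]; simp
    rw [hE, hgp1, hC, hzero]; ring
  -- E0 = p^f F0 + G0
  have hsplit : E0 = (p : ℤ) ^ f * F0 + G0 := by
    have hIoc : Finset.Icc 1 (2 * f) = Finset.Ioc 0 (2 * f) := by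
      ext k; simp only [Finset.mem_Icc, Finset.mem_Ioc]; omega
    rw [hE0def, hIoc, ← Finset.sum_Ioc_consecutive _ (Nat.zero_le f) (by omega : f ≤ 2 * f)]
    have h1 : Finset.Ioc 0 f = Finset.Icc 1 f := by
      ext k; simp only [Finset.mem_Icc, Finset.mem_Ioc]; omega
    have h2 : ∑ k ∈ Finset.Ioc 0 f, h k = (p : ℤ) ^ f * F0 := by
      rw [h1, hF0, Finset.mul_sum]
      refine Finset.sum_congr rfl fun k hk => ?_
      simp only [Finset.mem_Icc] at hk
      simp only [hh]
      rw [show 2 * f - k = f + (f - k) by omega, pow_add]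
      ring
    have h3 : ∑ k ∈ Finset.Ioc f (2 * f), h k = G0 := by
      rw [hG0]
      refine Finset.sum_nbij' (fun k => k - f) (fun k => k + f) ?_ ?_ ?_ ?_ ?_
      · intro a ha; simp only [Finset.mem_Ioc, Finset.mem_Icc] at *; omega
      · intro b hb; simp only [Finset.mem_Ioc, Finset.mem_Icc] at *; omega
      · intro a ha; simp only [Finset.mem_Ioc] at ha; show a - f + f = a; omega
      · intro b hb; show b + f - f = b; omega
      · intro a ha; simp only [Finset.mem_Ioc] at ha
        show h a = (p : ℤ) ^ (f - (a - f)) * c (((a - f : ℕ) : ZMod (2 * f)) + (f : ZMod (2 * f)))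
        simp only [hh]
        rw [← Nat.cast_add, Nat.sub_add_cancel (by omega : f ≤ a),
          show 2 * f - a = f - (a - f) by omega]
    rw [h2, h3]
  -- D_0 = E0 - (p^f + 1) F0
  have hDE : Dsum p f c 0 = E0 - ((p : ℤ) ^ f + 1) * F0 := by
    have hD : Dsum p f c 0 = G0 - F0 := by
      rw [Dsum, hG0, hF0, ← Finset.sum_sub_distrib]
      refine Finset.sum_congr rfl fun k _ => ?_
      rw [zero_add]
      ring
    rw [hD, hsplit]; ring
  have h2f : (p : ℤ) ^ (2 * f) = (p : ℤ) ^ f * (p : ℤ) ^ f := by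
    rw [← pow_add]; congr 1; ring
  rw [h2f] at hE0C ⊢
  linear_combination ((p : ℤ) ^ f - 1) * hDE + ((p : ℤ) ^ f - 1) * hE0C
/-- `p^f · C ≡ B'` modulo `Q = p^{2f} - 1` (in `ZMod Q`). -/
lemma shift_identity (p f : ℕ) [NeZero (2 * f)] (c : ZMod (2 * f) → ℤ) (hp : 1 ≤ p)
    (hf : 1 ≤ f) :
    (((p : ℤ) ^ f * Xsum p f c : ℤ) : ZMod (p ^ (2 * f) - 1)) =
      ((Xsum p f (fun j => c (j + (f : ZMod (2 * f)))) : ℤ) : ZMod (p ^ (2 * f) - 1)) := by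
  set Q : ℕ := p ^ (2 * f) - 1 with hQ
  have hp2f : 1 ≤ p ^ (2 * f) := Nat.one_le_pow _ _ (by omega)
  have hP : ((p : ℕ) : ZMod Q) ^ (2 * f) = 1 := by
    calc ((p : ℕ) : ZMod Q) ^ (2 * f) = ((p ^ (2 * f) : ℕ) : ZMod Q) := by push_cast; ring
      _ = ((Q + 1 : ℕ) : ZMod Q) := by rw [show Q + 1 = p ^ (2 * f) by omega]
      _ = 1 := by push_cast [ZMod.natCast_self]; ring
  rw [Xsum, Xsum]
  push_cast
  rw [Finset.mul_sum]
  apply Fintype.sum_equiv (Equiv.subRight (f : ZMod (2 * f)))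
  intro j
  simp only [Equiv.subRight_apply]
  have hv1 : j.val ≤ 2 * f := le_of_lt (ZMod.val_lt j)
  have hv2 : (j - (f : ZMod (2 * f))).val ≤ 2 * f := le_of_lt (ZMod.val_lt _)
  have hcast : ((f + (2 * f - j.val) : ℕ) : ZMod (2 * f)) =
      ((2 * f - (j - (f : ZMod (2 * f))).val : ℕ) : ZMod (2 * f)) := by
    rw [Nat.cast_add, Nat.cast_sub hv1, Nat.cast_sub hv2, ZMod.natCast_self,
      ZMod.natCast_rightInverse j, ZMod.natCast_rightInverse (j - (f : ZMod (2 * f)))]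
    ring
  have hexp : ((p : ℕ) : ZMod Q) ^ (f + (2 * f - j.val)) =
      ((p : ℕ) : ZMod Q) ^ (2 * f - (j - (f : ZMod (2 * f))).val) :=
    pow_congr_mod _ (2 * f) hP ((ZMod.natCast_eq_natCast_iff _ _ _).mp hcast)
  rw [show j - (f : ZMod (2 * f)) + (f : ZMod (2 * f)) = j by ring, ← mul_assoc, ← pow_add,
    hexp]
/-- Conversion of `Cconst` to a `univ` sum. -/
lemma Cconst_eq (p f : ℕ) [NeZero (2 * f)] (c : ZMod (2 * f) → ℤ) :
    Cconst p f c = Xsum p f c := by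
  rw [Cconst, Xsum]
  rw [show (∑ i ∈ Finset.range (2 * f), (p : ℤ) ^ (2 * f - i) * c (i : ZMod (2 * f))) =
      ∑ i ∈ Finset.range (2 * f),
        (fun j : ZMod (2 * f) => (p : ℤ) ^ (2 * f - j.val) * c j) (i : ZMod (2 * f)) from
    Finset.sum_congr rfl fun i hi => by
      simp only [ZMod.val_cast_of_lt (Finset.mem_range.mp hi)]]
  exact sum_range_zmod (fun j : ZMod (2 * f) => (p : ℤ) ^ (2 * f - j.val) * c j)

/-- Decomposition of `Psi`. -/
lemma Psi_eq (p f : ℕ) [NeZero (2 * f)] (c : ZMod (2 * f) → ℤ) (J : Finset (ZMod (2 * f)))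
    (x : ZMod (2 * f) → ℤ) :
    Psi p f c J x = (Xsum p f (fun j => c (j + (f : ZMod (2 * f)))) +
      ∑ j ∈ J, gfun p f c j) + Xsum p f x := by
  rw [Psi]
  congr 1
  · calc (∑ i ∈ Finset.range (2 * f),
          if (i : ZMod (2 * f)) ∈ J then (p : ℤ) ^ (2 * f - i) * c (i : ZMod (2 * f))
          else (p : ℤ) ^ (2 * f - i) * c ((i : ZMod (2 * f)) + (f : ZMod (2 * f))))
        = ∑ i ∈ Finset.range (2 * f),
            (fun j : ZMod (2 * f) =>
              if j ∈ J then (p : ℤ) ^ (2 * f - j.val) * c j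
              else (p : ℤ) ^ (2 * f - j.val) * c (j + (f : ZMod (2 * f)))) (i : ZMod (2 * f)) := by
          refine Finset.sum_congr rfl fun i hi => ?_
          simp only [ZMod.val_cast_of_lt (Finset.mem_range.mp hi)]
      _ = ∑ j : ZMod (2 * f),
            (if j ∈ J then (p : ℤ) ^ (2 * f - j.val) * c j
              else (p : ℤ) ^ (2 * f - j.val) * c (j + (f : ZMod (2 * f)))) :=
          sum_range_zmod (fun j : ZMod (2 * f) =>
            if j ∈ J then (p : ℤ) ^ (2 * f - j.val) * c j
            else (p : ℤ) ^ (2 * f - j.val) * c (j + (f : ZMod (2 * f))))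
      _ = ∑ j : ZMod (2 * f),
            ((p : ℤ) ^ (2 * f - j.val) * c (j + (f : ZMod (2 * f))) +
              (if j ∈ J then gfun p f c j else 0)) := by
          refine Finset.sum_congr rfl fun j _ => ?_
          by_cases hj : j ∈ J <;> simp [hj, gfun] <;> ring
      _ = Xsum p f (fun j => c (j + (f : ZMod (2 * f)))) + ∑ j ∈ J, gfun p f c j := by
          classical
          rw [Finset.sum_add_distrib, Xsum, Fintype.sum_ite_mem J (gfun p f c)]
  · rw [Xsum]
    rw [show (∑ i ∈ Finset.range (2 * f), (p : ℤ) ^ (2 * f - i) * x (i : ZMod (2 * f))) =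
        ∑ i ∈ Finset.range (2 * f),
          (fun j : ZMod (2 * f) => (p : ℤ) ^ (2 * f - j.val) * x j) (i : ZMod (2 * f)) from
      Finset.sum_congr rfl fun i hi => by
        simp only [ZMod.val_cast_of_lt (Finset.mem_range.mp hi)]]
    exact sum_range_zmod (fun j : ZMod (2 * f) => (p : ℤ) ^ (2 * f - j.val) * x j)
/-- `(p^{2f}−1)` divides `p(p^{2f−1} r_0 + ⋯ + r_{2f−1})`, and with `s_0`
the quotient and `k_0 := C` if `0 ∈ J`, `k_0 := p^f C` otherwise, one has
`k_0 + s_0 ≡ Ψ(J,x) (mod p^{2f}−1)`. -/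
theorem stmt_2 (p f e : ℕ) (hp : p.Prime) (hodd : Odd p) (hf : 1 ≤ f) (he : 1 ≤ e)
    (c : ZMod (2 * f) → ℤ) (hc : ∀ i, 0 ≤ c i ∧ c i ≤ (p : ℤ) - 1)
    (J : Finset (ZMod (2 * f))) (x : ZMod (2 * f) → ℤ) :
    ((p : ℤ) ^ (2 * f) - 1) ∣
        (p : ℤ) *
          ∑ i ∈ Finset.range (2 * f),
            (p : ℤ) ^ (2 * f - 1 - i) * rdef p f c J x (i : ZMod (2 * f)) ∧
    (if (0 : ZMod (2 * f)) ∈ J then Cconst p f c else (p : ℤ) ^ f * Cconst p f c) +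
        (p : ℤ) *
            (∑ i ∈ Finset.range (2 * f),
              (p : ℤ) ^ (2 * f - 1 - i) * rdef p f c J x (i : ZMod (2 * f))) /
          ((p : ℤ) ^ (2 * f) - 1)
      ≡ Psi p f c J x [ZMOD ((p : ℤ) ^ (2 * f) - 1)] := by
  haveI : NeZero (2 * f) := ⟨by omega⟩
  have hq1 : (1 : ℤ) < (p : ℤ) ^ (2 * f) := by
    apply one_lt_pow₀ (by exact_mod_cast hp.one_lt) (by omega)
  have hq0 : ((p : ℤ) ^ (2 * f) - 1) ≠ 0 := sub_ne_zero.mpr (ne_of_gt hq1)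
  have hkey := key_sum p f c hf J x
  constructor
  · exact ⟨_, hkey⟩
  · rw [hkey, Int.mul_ediv_cancel_left _ hq0]
    set Q : ℕ := p ^ (2 * f) - 1 with hQdef
    have hp2f : 1 ≤ p ^ (2 * f) := Nat.one_le_pow _ _ hp.pos
    have hQcast : ((Q : ℕ) : ℤ) = (p : ℤ) ^ (2 * f) - 1 := by
      rw [hQdef, Nat.cast_sub hp2f]; push_cast; ring
    rw [← hQcast, ← ZMod.intCast_eq_intCast_iff]
    have hP1 : ((p : ℕ) : ZMod Q) ^ (2 * f) = 1 := by
      calc ((p : ℕ) : ZMod Q) ^ (2 * f) = ((p ^ (2 * f) : ℕ) : ZMod Q) := by push_cast; ring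
        _ = ((Q + 1 : ℕ) : ZMod Q) := by rw [show Q + 1 = p ^ (2 * f) by omega]
        _ = 1 := by push_cast [ZMod.natCast_self]; ring
    -- decompose the sum over J of mfun
    set W : ℤ := ((p : ℤ) ^ f - 1) * Dsum p f c 0 +
      (c 0 - c (f : ZMod (2 * f))) - (p : ℤ) ^ (2 * f) * (c 0 - c (f : ZMod (2 * f))) with hW
    have hMsum : ∑ j ∈ J, mfun p f c j =
        (∑ j ∈ J, gfun p f c j) + (if (0 : ZMod (2 * f)) ∈ J then W else 0) := by
      have hterm : ∀ j ∈ J, mfun p f c j = gfun p f c j + (if j = 0 then W else 0) := by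
        intro j _
        by_cases h0 : j = 0
        · subst h0
          rw [mfun, if_pos rfl, if_pos rfl, gfun, hW]
          simp only [ZMod.val_zero, Nat.sub_zero, zero_add]
          ring
        · rw [mfun, if_neg h0, if_neg h0, add_zero]
      rw [Finset.sum_congr rfl hterm, Finset.sum_add_distrib,
        Finset.sum_ite_eq' J 0 (fun _ => W)]
    rw [Psi_eq p f c J x, hMsum, Cconst_eq p f c]
    have hshift := shift_identity p f c hp.pos hf
    have h5 := D0_identity p f c hf
    rw [Cconst_eq p f c] at h5
    have h5' := congrArg (fun z : ℤ => (z : ZMod Q)) h5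
    push_cast at h5' hshift
    rw [hP1] at h5'
    by_cases h0J : (0 : ZMod (2 * f)) ∈ J
    · simp only [h0J, if_true]
      rw [hW]
      push_cast
      rw [hP1]
      linear_combination h5' + hshift
    · simp only [h0J, if_false]
      push_cast
      linear_combination hshift
end

section
/- Let p be an odd prime, f ≥ 1 an integer, and e ≥ p−1 an integer. Let c_0, …, c_{2f−1} be integers with 0 ≤ c_i ≤ p−1 (indices modulo 2f), and suppose c_i ≠ c_{i+f} for some i. Then for every integer t there exist a subset J ⊆ ℤ/2fℤ satisfying (i ∈ J if and only if i+f ∉ J) for all i, and integers x_0, …, x_{2f−1} with x_{i+f} = x_i for all i forming an allowable list for J and c, such that Σ_{i∈J} p^{f−π(i)} c_i + Σ_{i=0}^{f−1} p^{f−i} x_i ≡ t (mod p^f − 1). -/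
/-- The condition "there exists `j ≥ 1` with `c_{i+k} = c_{i+k+f}` for all `1 ≤ k < j`
and `c_{i+j} < c_{i+j+f}`" (indices mod `2f`). -/
def CondJ (f : ℕ) (c : ZMod (2 * f) → ℤ) (i : ZMod (2 * f)) : Prop :=
  ∃ j : ℕ, 1 ≤ j ∧
    (∀ k : ℕ, 1 ≤ k → k < j →
      c (i + (k : ZMod (2 * f))) = c (i + (k : ZMod (2 * f)) + (f : ZMod (2 * f)))) ∧
    c (i + (j : ZMod (2 * f))) < c (i + (j : ZMod (2 * f)) + (f : ZMod (2 * f)))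

/-- `x_i` is allowable at `i` for `J` and `c` (with bound `e`). -/
def AllowableAt (f e : ℕ) (c : ZMod (2 * f) → ℤ) (J : Finset (ZMod (2 * f)))
    (x : ZMod (2 * f) → ℤ) (i : ZMod (2 * f)) : Prop :=
  0 ≤ x i ∧ x i ≤ (e : ℤ) ∧
  (i ∈ J → i + 1 ∉ J →
    ((CondJ f c i → x i ≠ (e : ℤ)) ∧ (¬ CondJ f c i → x i ≠ 0))) ∧
  (i ∉ J → i + 1 ∈ J →
    ((CondJ f c i → x i ≠ 0) ∧ (¬ CondJ f c i → x i ≠ (e : ℤ))))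

/-- The list `x` is allowable for `J` and `c`. -/
def Allowable (f e : ℕ) (c : ZMod (2 * f) → ℤ) (J : Finset (ZMod (2 * f)))
    (x : ZMod (2 * f) → ℤ) : Prop :=
  ∀ i, AllowableAt f e c J x i

namespace St4

lemma two_f_cast (f : ℕ) : ((f : ZMod (2*f)) + (f : ZMod (2*f))) = 0 := by
  have h := ZMod.natCast_self (2*f)
  push_cast at h
  linear_combination h

lemma condJ_of_lt (f : ℕ) (c : ZMod (2 * f) → ℤ) (i : ZMod (2 * f))
    (h : c (i + 1) < c (i + 1 + (f : ZMod (2*f)))) : CondJ f c i := by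
  refine ⟨1, le_refl _, fun k hk1 hk2 => absurd hk2 (by omega), ?_⟩
  simpa using h

lemma not_condJ_of_gt (f : ℕ) (c : ZMod (2 * f) → ℤ) (i : ZMod (2 * f))
    (h : c (i + 1 + (f : ZMod (2*f))) < c (i + 1)) : ¬ CondJ f c i := by
  rintro ⟨j, hj1, heq, hlt⟩
  rcases eq_or_lt_of_le hj1 with hj | hj
  · rw [← hj] at hlt
    simp only [Nat.cast_one] at hlt
    exact absurd hlt (by linarith)
  · have h1 := heq 1 le_rfl hj
    simp only [Nat.cast_one] at h1
    linarith

lemma condJ_shift (f : ℕ) (c : ZMod (2 * f) → ℤ) (i : ZMod (2 * f))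
    (h : c (i + 1) = c (i + 1 + (f : ZMod (2*f)))) : CondJ f c i ↔ CondJ f c (i + 1) := by
  constructor
  · rintro ⟨j, hj1, heq, hlt⟩
    have hj2 : 2 ≤ j := by
      by_contra hc
      have : j = 1 := by omega
      rw [this] at hlt
      simp only [Nat.cast_one] at hlt
      rw [h] at hlt
      exact lt_irrefl _ hlt
    refine ⟨j - 1, by omega, ?_, ?_⟩
    · intro k hk1 hkj
      have hcast : i + 1 + ((k : ℕ) : ZMod (2*f)) = i + (((k+1) : ℕ) : ZMod (2*f)) := by
        push_cast; ring
      rw [hcast]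
      exact heq (k+1) (by omega) (by omega)
    · have hcast : i + 1 + (((j - 1) : ℕ) : ZMod (2*f)) = i + ((j : ℕ) : ZMod (2*f)) := by
        have hj' : (j - 1 + 1 : ℕ) = j := by omega
        rw [← hj']
        push_cast; ring
      rw [hcast]
      exact hlt
  · rintro ⟨j, hj1, heq, hlt⟩
    refine ⟨j + 1, by omega, ?_, ?_⟩
    · intro k hk1 hkj
      rcases eq_or_lt_of_le hk1 with hk | hk
      · rw [← hk]; simpa using h
      · have hcast : i + ((k : ℕ) : ZMod (2*f)) = i + 1 + (((k-1) : ℕ) : ZMod (2*f)) := by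
          have hk' : (k - 1 + 1 : ℕ) = k := by omega
          rw [← hk']
          push_cast; ring
        rw [hcast]
        exact heq (k-1) (by omega) (by omega)
    · have hcast : i + (((j+1) : ℕ) : ZMod (2*f)) = i + 1 + ((j : ℕ) : ZMod (2*f)) := by
        push_cast; ring
      rw [hcast]
      exact hlt

end St4

namespace St4

lemma exists_diff (f : ℕ) (hf : 1 ≤ f) (c : ZMod (2 * f) → ℤ)
    (hne : ∃ i, c i ≠ c (i + (f : ZMod (2 * f)))) (i : ZMod (2 * f)) :
    ∃ j : ℕ, 1 ≤ j ∧ c (i + (j : ZMod (2*f))) ≠ c (i + (j : ZMod (2*f)) + (f : ZMod (2*f))) := by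
  haveI : NeZero (2*f) := ⟨by omega⟩
  obtain ⟨i₀, h0⟩ := hne
  refine ⟨(i₀ - i).val + 2*f, by omega, ?_⟩
  have hcast : ((((i₀ - i).val + 2*f : ℕ)) : ZMod (2*f)) = i₀ - i := by
    push_cast [ZMod.natCast_zmod_val]
    linear_combination two_f_cast f
  rw [hcast]
  simpa using h0

lemma condJ_not_iff (f : ℕ) (hf : 1 ≤ f) (c : ZMod (2 * f) → ℤ)
    (hne : ∃ i, c i ≠ c (i + (f : ZMod (2 * f)))) (i : ZMod (2 * f)) :
    CondJ f c (i + (f : ZMod (2*f))) ↔ ¬ CondJ f c i := by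
  classical
  have hP := exists_diff f hf c hne i
  set j₀ := Nat.find hP with hj₀def
  obtain ⟨hj₀1, hj₀ne⟩ := Nat.find_spec hP
  have hmin : ∀ k : ℕ, 1 ≤ k → k < j₀ →
      c (i + (k : ZMod (2*f))) = c (i + (k : ZMod (2*f)) + (f : ZMod (2*f))) := by
    intro k hk1 hkj
    by_contra hne'
    exact (Nat.find_min hP hkj) ⟨hk1, hne'⟩
  have e2f : ∀ z : ZMod (2*f), z + (f : ZMod (2*f)) + (f : ZMod (2*f)) = z := by
    intro z
    rw [add_assoc, two_f_cast f, add_zero]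
  have h1 : CondJ f c i ↔ c (i + (j₀ : ZMod (2*f))) < c (i + (j₀ : ZMod (2*f)) + (f : ZMod (2*f))) := by
    constructor
    · rintro ⟨j, hj1, heq, hlt⟩
      have hjj : j = j₀ := by
        rcases lt_trichotomy j j₀ with h | h | h
        · rw [hmin j hj1 h] at hlt; exact absurd hlt (lt_irrefl _)
        · exact h
        · exact absurd (heq j₀ hj₀1 h) hj₀ne
      rw [hjj] at hlt; exact hlt
    · intro h; exact ⟨j₀, hj₀1, hmin, h⟩
  have h2 : CondJ f c (i + (f : ZMod (2*f))) ↔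
      c (i + (j₀ : ZMod (2*f)) + (f : ZMod (2*f))) < c (i + (j₀ : ZMod (2*f))) := by
    have eA : ∀ j : ZMod (2*f), i + (f : ZMod (2*f)) + j = i + j + (f : ZMod (2*f)) := by
      intro j; ring
    have eB : ∀ j : ZMod (2*f), i + (f : ZMod (2*f)) + j + (f : ZMod (2*f)) = i + j := by
      intro j; rw [eA]; exact e2f _
    constructor
    · rintro ⟨j, hj1, heq, hlt⟩
      rw [eB, eA] at hlt
      have hjj : j = j₀ := by
        rcases lt_trichotomy j j₀ with h | h | h
        · rw [hmin j hj1 h] at hlt; exact absurd hlt (lt_irrefl _)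
        · exact h
        · have := heq j₀ hj₀1 h
          rw [eB, eA] at this
          exact absurd this.symm hj₀ne
      rw [hjj] at hlt; exact hlt
    · intro h
      refine ⟨j₀, hj₀1, ?_, ?_⟩
      · intro k hk1 hkj
        rw [eB, eA]
        exact (hmin k hk1 hkj).symm
      · rw [eB, eA]
        exact h
  rw [h1, h2]
  constructor
  · intro hlt hlt'
    linarith
  · intro hnlt
    rcases lt_trichotomy (c (i + (j₀ : ZMod (2*f)))) (c (i + (j₀ : ZMod (2*f)) + (f : ZMod (2*f)))) with h | h | h
    · exact absurd h hnlt
    · exact absurd h hj₀ne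
    · exact h

end St4

namespace St4

def Jw (f : ℕ) [NeZero (2*f)] (a : ℕ) : Finset (ZMod (2*f)) :=
  Finset.univ.filter (fun i => (i - (a : ZMod (2*f))).val < f)

section JwLemmas

variable (f : ℕ) [NeZero (2*f)]

lemma mem_Jw (a : ℕ) (i : ZMod (2*f)) : i ∈ Jw f a ↔ (i - (a : ZMod (2*f))).val < f := by
  simp [Jw]

lemma val_f (hf : 1 ≤ f) : ((f : ℕ) : ZMod (2*f)).val = f := by
  rw [ZMod.val_natCast]
  exact Nat.mod_eq_of_lt (by omega)

lemma val_add_f (hf : 1 ≤ f) (z : ZMod (2*f)) :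
    (z + (f : ZMod (2*f))).val = if z.val < f then z.val + f else z.val - f := by
  rw [ZMod.val_add, val_f f hf]
  have hz : z.val < 2*f := z.val_lt
  by_cases h : z.val < f
  · rw [if_pos h]
    exact Nat.mod_eq_of_lt (by omega)
  · rw [if_neg h]
    rw [Nat.mod_eq_sub_mod (by omega)]
    have : z.val + f - 2*f = z.val - f := by omega
    rw [this]
    exact Nat.mod_eq_of_lt (by omega)

lemma val_add_one (hf : 1 ≤ f) (z : ZMod (2*f)) :
    (z + 1).val = if z.val = 2*f - 1 then 0 else z.val + 1 := by
  haveI : Fact (1 < 2*f) := ⟨by omega⟩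
  rw [ZMod.val_add, ZMod.val_one]
  have hz : z.val < 2*f := z.val_lt
  by_cases h : z.val = 2*f - 1
  · rw [if_pos h, h]
    simp [Nat.sub_add_cancel (by omega : 1 ≤ 2*f)]
  · rw [if_neg h]
    exact Nat.mod_eq_of_lt (by omega)

lemma Jw_compl (hf : 1 ≤ f) (a : ℕ) (i : ZMod (2*f)) :
    i ∈ Jw f a ↔ i + (f : ZMod (2*f)) ∉ Jw f a := by
  rw [mem_Jw, mem_Jw]
  have he : i + (f : ZMod (2*f)) - (a : ZMod (2*f)) = (i - a) + (f : ZMod (2*f)) := by ring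
  rw [he, val_add_f f hf]
  have := (i - (a : ZMod (2*f))).val_lt
  by_cases h : (i - (a : ZMod (2*f))).val < f
  · rw [if_pos h]; omega
  · rw [if_neg h]; omega

lemma cross_out (hf : 1 ≤ f) (a : ℕ) (i : ZMod (2*f)) (h1 : i ∈ Jw f a) (h2 : i + 1 ∉ Jw f a) :
    i = (a : ZMod (2*f)) + (((f - 1 : ℕ)) : ZMod (2*f)) := by
  rw [mem_Jw] at h1 h2
  have he : i + 1 - (a : ZMod (2*f)) = (i - a) + 1 := by ring
  rw [he, val_add_one f hf] at h2
  set w := i - (a : ZMod (2*f)) with hw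
  have hwv : w.val = f - 1 := by
    by_cases h : w.val = 2*f - 1
    · omega
    · rw [if_neg h] at h2; omega
  have hwc : w = (((f - 1 : ℕ)) : ZMod (2*f)) := by
    rw [← ZMod.natCast_zmod_val w, hwv]
  rw [← hwc, hw]; ring

lemma cross_in (hf : 1 ≤ f) (a : ℕ) (i : ZMod (2*f)) (h1 : i ∉ Jw f a) (h2 : i + 1 ∈ Jw f a) :
    i = (a : ZMod (2*f)) + (((2*f - 1 : ℕ)) : ZMod (2*f)) := by
  rw [mem_Jw] at h1 h2
  have he : i + 1 - (a : ZMod (2*f)) = (i - a) + 1 := by ring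
  rw [he, val_add_one f hf] at h2
  set w := i - (a : ZMod (2*f)) with hw
  have := w.val_lt
  have hwv : w.val = 2*f - 1 := by
    by_cases h : w.val = 2*f - 1
    · exact h
    · rw [if_neg h] at h2; omega
  have hwc : w = (((2*f - 1 : ℕ)) : ZMod (2*f)) := by
    rw [← ZMod.natCast_zmod_val w, hwv]
  rw [← hwc, hw]; ring

lemma mem_step (a : ℕ) (i : ZMod (2*f)) (h0 : i - (a : ZMod (2*f)) ≠ 0)
    (hfne : i - (a : ZMod (2*f)) ≠ ((f : ℕ) : ZMod (2*f))) :
    (i ∈ Jw f (a+1) ↔ i ∈ Jw f a) := by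
  rw [mem_Jw, mem_Jw]
  set w := i - (a : ZMod (2*f)) with hw
  have hv0 : w.val ≠ 0 := by
    intro h
    exact h0 (by rw [← ZMod.natCast_zmod_val w, h]; simp)
  have hvf : w.val ≠ f := by
    intro h
    exact hfne (by rw [← ZMod.natCast_zmod_val w, h])
  have hvlt := w.val_lt
  have he : i - ((a + 1 : ℕ) : ZMod (2*f)) = ((w.val - 1 : ℕ) : ZMod (2*f)) := by
    rw [Nat.cast_sub (show 1 ≤ w.val by omega), Nat.cast_one, ZMod.natCast_zmod_val, hw]
    push_cast
    ring
  rw [he, ZMod.val_natCast]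
  rw [Nat.mod_eq_of_lt (by omega : w.val - 1 < 2*f)]
  omega

end JwLemmas
end St4

namespace St4

def dgt (p M k : ℕ) : ℕ := M / p ^ k % p

lemma dgt_le (p M k : ℕ) (hp : 1 ≤ p) : dgt p M k ≤ p - 1 := by
  have := Nat.mod_lt (M / p^k) (show 0 < p by omega)
  unfold dgt
  omega

lemma sum_dgt (p : ℕ) (n M : ℕ) :
    ∑ k ∈ Finset.range n, p ^ k * dgt p M k = M % p ^ n := by
  induction n with
  | zero => simp [Nat.mod_one]
  | succ n ih =>
    rw [Finset.sum_range_succ, ih, pow_succ, Nat.mod_mul]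
    unfold dgt
    ring

lemma dgt_pred (p f k : ℕ) (hp : 2 ≤ p) (hk : k < f) : dgt p (p^f - 1) k = p - 1 := by
  unfold dgt
  have hA : 1 ≤ p ^ k := Nat.one_le_pow _ _ (by omega)
  have hB : p ≤ p ^ (f - k) := by
    calc p = p ^ 1 := (pow_one p).symm
    _ ≤ p ^ (f-k) := Nat.pow_le_pow_right (by omega) (by omega)
  have hsplit : p ^ f - 1 = p ^ k * (p ^ (f-k) - 1) + (p ^ k - 1) := by
    have hmul : p ^ k * p ^ (f - k) = p ^ f := by
      rw [← pow_add]
      congr 1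
      omega
    have h1 : p ^ k * (p ^ (f-k) - 1) = p ^ f - p ^ k := by
      rw [Nat.mul_sub, ← hmul, mul_one]
    have h2 : p ^ k ≤ p ^ f := Nat.pow_le_pow_right (by omega) (by omega)
    omega
  rw [hsplit]
  rw [add_comm, Nat.add_mul_div_left _ _ (show 0 < p^k by omega), Nat.div_eq_of_lt (by omega), zero_add]
  -- now (p^(f-k) - 1) % p = p - 1
  have hC : 1 ≤ p ^ (f - k - 1) := Nat.one_le_pow _ _ (by omega)
  have hsplit2 : p ^ (f-k) - 1 = (p ^ (f - k - 1) - 1) * p + (p - 1) := by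
    have hmul2 : p ^ (f - k - 1) * p = p ^ (f - k) := by
      rw [← pow_succ]
      congr 1
      omega
    have h3 : (p ^ (f - k - 1) - 1) * p = p ^ (f - k) - p := by
      rw [Nat.sub_mul, one_mul, hmul2]
    omega
  rw [hsplit2, mul_comm, Nat.mul_add_mod]
  exact Nat.mod_eq_of_lt (by omega)

end St4

namespace St4

lemma zpow_f (p f : ℕ) (hf : 1 ≤ f) (hp : 2 ≤ p) : ((p : ZMod (p^f - 1)))^f = 1 := by
  have h1 : (1:ℕ) ≤ p ^ f := Nat.one_le_pow _ _ (by omega)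
  have : ((p : ZMod (p^f - 1)))^f = ((p^f : ℕ) : ZMod (p^f - 1)) := by push_cast; ring
  rw [this, show p^f = (p^f - 1) + 1 by omega]
  push_cast [ZMod.natCast_self]
  ring

lemma zpow_congr (p f : ℕ) (hf : 1 ≤ f) (hp : 2 ≤ p) (m n : ℕ) (h : m % f = n % f) :
    ((p : ZMod (p^f - 1)))^m = ((p : ZMod (p^f - 1)))^n := by
  have key : ∀ m : ℕ, ((p : ZMod (p^f - 1)))^m = ((p : ZMod (p^f - 1)))^(m % f) := by
    intro m
    conv_lhs => rw [← Nat.div_add_mod m f]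
    rw [pow_add, pow_mul, zpow_f p f hf hp, one_pow, one_mul]
  rw [key m, key n, h]

def Sg (p f : ℕ) (c : ZMod (2 * f) → ℤ) (J : Finset (ZMod (2 * f))) : ℤ :=
  ∑ i ∈ Finset.range (2 * f),
    if (i : ZMod (2 * f)) ∈ J then (p : ℤ) ^ (f - i % f) * c (i : ZMod (2 * f)) else 0

section Sstep

variable (p f : ℕ) [NeZero (2*f)]

lemma natCast_eq_iff (hf : 1 ≤ f) (i : ℕ) (hi : i < 2*f) (b : ℕ) :
    ((i : ZMod (2*f)) = (b : ZMod (2*f))) ↔ i = b % (2*f) := by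
  constructor
  · intro h
    have := congrArg ZMod.val h
    rwa [ZMod.val_natCast, ZMod.val_natCast, Nat.mod_eq_of_lt hi] at this
  · intro h
    rw [h, ZMod.natCast_mod]

lemma S_step (hf : 1 ≤ f) (hp : 2 ≤ p) (c : ZMod (2 * f) → ℤ) (a : ℕ) :
    Sg p f c (Jw f (a+1)) = Sg p f c (Jw f a)
      + (p : ℤ) ^ (f - a % f) * (c ((a : ZMod (2*f)) + (f : ZMod (2*f))) - c (a : ZMod (2*f))) := by
  have hmodmod : ∀ n : ℕ, n % (2*f) % f = n % f := fun n => Nat.mod_mod_of_dvd n ⟨2, by ring⟩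
  set T : ℕ → ℤ := fun i => (p : ℤ) ^ (f - i % f) * c (i : ZMod (2*f)) with hT
  have hane : (a + f) % (2*f) ≠ a % (2*f) := by
    intro h
    have h2 : (((a+f) % (2*f) : ℕ) : ZMod (2*f)) = ((a % (2*f) : ℕ) : ZMod (2*f)) := by rw [h]
    rw [ZMod.natCast_mod, ZMod.natCast_mod] at h2
    push_cast at h2
    have h3 : ((f:ℕ) : ZMod (2*f)) = 0 := by linear_combination h2
    have h4 := congrArg ZMod.val h3
    rw [val_f f hf, ZMod.val_zero] at h4
    omega
  have key : ∀ i ∈ Finset.range (2*f),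
      (if (i : ZMod (2*f)) ∈ Jw f (a+1) then T i else 0)
      = ((if (i : ZMod (2*f)) ∈ Jw f a then T i else 0)
        + (if i = (a + f) % (2*f) then T i else 0)) - (if i = a % (2*f) then T i else 0) := by
    intro i hi
    rw [Finset.mem_range] at hi
    by_cases hA : i = a % (2*f)
    · rw [if_pos hA]
      have hAne : i ≠ (a+f) % (2*f) := by rw [hA]; exact fun h => hane h.symm
      rw [if_neg hAne]
      have hcast : (i : ZMod (2*f)) = (a : ZMod (2*f)) := (natCast_eq_iff f hf i hi a).mpr hA
      have hin : (i : ZMod (2*f)) ∈ Jw f a := by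
        rw [mem_Jw, hcast, sub_self, ZMod.val_zero]
        omega
      have hout : (i : ZMod (2*f)) ∉ Jw f (a+1) := by
        rw [mem_Jw, hcast]
        have : (a : ZMod (2*f)) - ((a+1 : ℕ) : ZMod (2*f)) = (((2*f - 1 : ℕ)) : ZMod (2*f)) := by
          have h1 : ((2*f - 1 : ℕ) : ZMod (2*f)) + 1 = ((2*f : ℕ) : ZMod (2*f)) := by
            rw [← Nat.cast_add_one]
            congr 1
            omega
          rw [ZMod.natCast_self] at h1
          push_cast
          linear_combination -h1
        rw [this, ZMod.val_natCast, Nat.mod_eq_of_lt (by omega)]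
        omega
      rw [if_pos hin, if_neg hout]
      ring
    · rw [if_neg hA]
      by_cases hB : i = (a + f) % (2*f)
      · rw [if_pos hB]
        have hcast : (i : ZMod (2*f)) = (a : ZMod (2*f)) + (f : ZMod (2*f)) := by
          rw [(natCast_eq_iff f hf i hi (a+f)).mpr hB]
          push_cast [ZMod.natCast_mod]
          ring
        have hout : (i : ZMod (2*f)) ∉ Jw f a := by
          rw [mem_Jw, hcast]
          have : (a : ZMod (2*f)) + (f : ZMod (2*f)) - (a : ZMod (2*f)) = ((f:ℕ) : ZMod (2*f)) := by ring
          rw [this, val_f f hf]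
          omega
        have hin : (i : ZMod (2*f)) ∈ Jw f (a+1) := by
          rw [mem_Jw, hcast]
          have : (a : ZMod (2*f)) + (f : ZMod (2*f)) - ((a+1:ℕ) : ZMod (2*f)) = (((f - 1:ℕ)) : ZMod (2*f)) := by
            rw [Nat.cast_sub (by omega : 1 ≤ f), Nat.cast_one]
            push_cast
            ring
          rw [this, ZMod.val_natCast, Nat.mod_eq_of_lt (by omega)]
          omega
        rw [if_pos hin, if_neg hout]
        ring
      · rw [if_neg hB]
        have h0 : (i : ZMod (2*f)) - (a : ZMod (2*f)) ≠ 0 := by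
          intro h
          exact hA ((natCast_eq_iff f hf i hi a).mp (by linear_combination h))
        have hfne : (i : ZMod (2*f)) - (a : ZMod (2*f)) ≠ ((f:ℕ) : ZMod (2*f)) := by
          intro h
          apply hB
          apply (natCast_eq_iff f hf i hi (a+f)).mp
          push_cast
          linear_combination h
        rw [if_congr (mem_step f a (i : ZMod (2*f)) h0 hfne) rfl rfl]
        ring
  rw [Sg, Finset.sum_congr rfl key, Sg]
  rw [Finset.sum_sub_distrib, Finset.sum_add_distrib]
  rw [Finset.sum_ite_eq' (Finset.range (2*f)) ((a+f) % (2*f)) T,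
      Finset.sum_ite_eq' (Finset.range (2*f)) (a % (2*f)) T]
  rw [if_pos (Finset.mem_range.mpr (Nat.mod_lt _ (by omega))),
      if_pos (Finset.mem_range.mpr (Nat.mod_lt _ (by omega)))]
  rw [hT]
  simp only []
  rw [hmodmod (a+f), hmodmod a, Nat.add_mod_right, ZMod.natCast_mod, ZMod.natCast_mod]
  push_cast
  ring

end Sstep
end St4

namespace St4

set_option maxHeartbeats 1000000 in
lemma core (p f : ℕ) (hp : 2 ≤ p) (hf : 1 ≤ f) (tv : ℕ → ℕ) (CJ : ℕ → Prop) (δ : ℕ → ℤ)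
    (hδ : ∀ a, |δ a| ≤ (p:ℤ) - 1)
    (htv : ∀ a, tv a ≤ p^f - 2)
    (hrec : ∀ a, ((p^f - 1 : ℕ) : ℤ) ∣ ((p:ℤ) * tv a - δ a - tv (a+1)))
    (hCJδ : ∀ a, (CJ a → δ a ≤ 0) ∧ (¬CJ a → 0 ≤ δ a))
    (hCJ0 : ∀ a, δ a = 0 → (CJ a ↔ CJ (a+1)))
    (hfail : ∀ a, (CJ a → tv a % p = p - 1) ∧ (¬CJ a → tv a % p = 0 ∧ tv a ≠ 0)) :
    False := by
  classical
  have hpZ : (2:ℤ) ≤ (p:ℤ) := by exact_mod_cast hp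
  have hpf1 : 1 ≤ p ^ f := Nat.one_le_pow _ _ (by omega)
  set Q : ℤ := (p:ℤ)^f - 1 with hQdef
  set P : ℤ := (p:ℤ)^(f-1) with hPdef
  have hppow : (p:ℤ)^f = P * (p:ℤ) := by
    rw [hPdef, ← pow_succ, show f-1+1 = f by omega]
  have hQP : Q = (p:ℤ) * P - 1 := by rw [hQdef, hppow]; ring
  have hP1 : (1:ℤ) ≤ P := one_le_pow₀ (by omega)
  have hQ2 : (1:ℤ) ≤ Q := by nlinarith
  have hQpos : (0:ℤ) < Q := by omega
  have hQcast : ((p^f - 1 : ℕ) : ℤ) = Q := by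
    push_cast [Nat.cast_sub hpf1]
    rw [hQdef]
  have htvZ : ∀ a, (tv a : ℤ) ≤ Q - 1 := by
    intro a
    have h1 := htv a
    have : ((tv a : ℕ) : ℤ) ≤ ((p^f - 2 : ℕ) : ℤ) := by exact_mod_cast h1
    rw [Nat.cast_sub (by omega)] at this
    push_cast at this
    omega
  set r : ℕ → ℤ := fun a => if CJ a then Q - (tv a : ℤ) else (tv a : ℤ) with hrdef
  have hr : ∀ a, 1 ≤ r a ∧ r a ≤ Q - 1 ∧ (p:ℤ) ∣ r a := by
    intro a
    have hdm := Nat.div_add_mod (tv a) p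
    have htva := htvZ a
    by_cases h : CJ a
    · have h1 := (hfail a).1 h
      have h2 : (tv a : ℤ) = (p:ℤ) * (tv a / p : ℕ) + ((p:ℤ) - 1) := by
        rw [h1] at hdm
        have : ((tv a : ℕ) : ℤ) = ((p * (tv a / p) + (p - 1) : ℕ) : ℤ) := by exact_mod_cast hdm.symm
        rw [this]
        push_cast [Nat.cast_sub (by omega : 1 ≤ p)]
        ring
      simp only [hrdef, if_pos h]
      refine ⟨by omega, by omega, ⟨P - (tv a / p : ℕ) - 1, by rw [h2, hQP]; ring⟩⟩
    · obtain ⟨h1, h3⟩ := (hfail a).2 h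
      have h2 : (tv a : ℤ) = (p:ℤ) * (tv a / p : ℕ) := by
        rw [h1, Nat.add_zero] at hdm
        exact_mod_cast hdm.symm
      have h4 : (1:ℤ) ≤ (tv a : ℤ) := by
        have : 1 ≤ tv a := Nat.one_le_iff_ne_zero.mpr h3
        exact_mod_cast this
      simp only [hrdef, if_neg h]
      exact ⟨h4, by omega, ⟨(tv a / p : ℕ), h2⟩⟩
  -- the key step
  have hstep : ∀ a, r (a+1) = (p:ℤ) * (r a - |δ a| * P) ∨
      r (a+1) = -((p:ℤ) * (r a - |δ a| * P)) := by
    intro a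
    obtain ⟨K, hK⟩ := hrec a
    rw [hQcast] at hK
    obtain ⟨h1a, h2a, X', hX'⟩ := hr a
    obtain ⟨h1b, h2b, Y', hY'⟩ := hr (a+1)
    have hδa := hδ a
    have habs : |δ a| ≤ (p:ℤ) - 1 := hδa
    by_cases hca : CJ a <;> by_cases hcb : CJ (a+1)
    · -- TT : tv a = Q - r a, tv (a+1) = Q - r (a+1), δ ≤ 0
      have hd0 : δ a ≤ 0 := (hCJδ a).1 hca
      have hta : (tv a : ℤ) = Q - r a := by simp only [hrdef, if_pos hca]; ring
      have htb : (tv (a+1) : ℤ) = Q - r (a+1) := by simp only [hrdef, if_pos hcb]; ring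
      rw [hta, htb] at hK
      set L : ℤ := (p:ℤ) - 1 - K with hLdef
      have heq : r (a+1) = (p:ℤ) * r a + δ a - Q * L := by rw [hLdef]; linarith [hK]
      have hdvd : (p:ℤ) ∣ (L - (-δ a)) := by
        refine ⟨Y' - (p:ℤ) * X' + P * L, ?_⟩
        have h5 : (p:ℤ) * Y' = (p:ℤ) * ((p:ℤ) * X') + δ a - ((p:ℤ)*P - 1) * L := by
          rw [← hY', ← hX', ← hQP]; exact heq
        linarith [h5]
      have hm1 : (p:ℤ) * r a ≤ (p:ℤ) * (Q-1) := mul_le_mul_of_nonneg_left h2a (by omega)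
      have hm2 : (p:ℤ) * 1 ≤ (p:ℤ) * r a := mul_le_mul_of_nonneg_left h1a (by omega)
      have habs' := abs_le.mp habs
      have hb1 : Q * L < Q * (p:ℤ) := by linarith [heq, hm1, hd0, h1b, hpZ]
      have hb2 : Q * (-1) < Q * L := by linarith [heq, hm2, habs'.1, h2b, hQ2]
      have hL1 : L < (p:ℤ) := lt_of_mul_lt_mul_left hb1 (by omega)
      have hL2 : -1 < L := lt_of_mul_lt_mul_left hb2 (by omega)
      have hLD : L = -δ a := by
        have := Int.eq_zero_of_abs_lt_dvd hdvd (by rw [abs_lt]; constructor <;> omega)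
        omega
      left
      rw [heq, hLD, abs_of_nonpos hd0, hQP]
      ring
    · -- TF : δ ≤ -1
      have hd0 : δ a ≤ 0 := (hCJδ a).1 hca
      have hdne : δ a ≠ 0 := fun h => hcb ((hCJ0 a h).mp hca)
      have hd1 : δ a ≤ -1 := by omega
      have hta : (tv a : ℤ) = Q - r a := by simp only [hrdef, if_pos hca]; ring
      have htb : (tv (a+1) : ℤ) = r (a+1) := by simp only [hrdef, if_neg hcb]
      rw [hta, htb] at hK
      set L : ℤ := (p:ℤ) - K with hLdef
      have heq : r (a+1) = -((p:ℤ) * r a) + (-δ a) + Q * L := by rw [hLdef]; linarith [hK]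
      have hdvd : (p:ℤ) ∣ (L - (-δ a)) := by
        refine ⟨-Y' - (p:ℤ) * X' + P * L, ?_⟩
        have h5 : (p:ℤ) * Y' = -((p:ℤ) * ((p:ℤ) * X')) + (-δ a) + ((p:ℤ)*P - 1) * L := by
          rw [← hY', ← hX', ← hQP]; exact heq
        linarith [h5]
      have hm1 : (p:ℤ) * r a ≤ (p:ℤ) * (Q-1) := mul_le_mul_of_nonneg_left h2a (by omega)
      have hm2 : (p:ℤ) * 1 ≤ (p:ℤ) * r a := mul_le_mul_of_nonneg_left h1a (by omega)
      have habs' := abs_le.mp habs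
      have hb1 : Q * L < Q * ((p:ℤ) + 1) := by linarith [heq, hm1, h2b, hd1, hQ2]
      have hb2 : Q * 0 < Q * L := by linarith [heq, hm2, h1b, habs'.1]
      have hL1 : L < (p:ℤ) + 1 := lt_of_mul_lt_mul_left hb1 (by omega)
      have hL2 : 0 < L := lt_of_mul_lt_mul_left hb2 (by omega)
      have hLD : L = -δ a := by
        have := Int.eq_zero_of_abs_lt_dvd hdvd (by rw [abs_lt]; constructor <;> omega)
        omega
      right
      rw [heq, hLD, abs_of_nonpos hd0, hQP]
      ring
    · -- FT : δ ≥ 1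
      have hd0 : 0 ≤ δ a := (hCJδ a).2 hca
      have hdne : δ a ≠ 0 := fun h => hca ((hCJ0 a h).mpr hcb)
      have hd1 : 1 ≤ δ a := by omega
      have hta : (tv a : ℤ) = r a := by simp only [hrdef, if_neg hca]
      have htb : (tv (a+1) : ℤ) = Q - r (a+1) := by simp only [hrdef, if_pos hcb]; ring
      rw [hta, htb] at hK
      set L : ℤ := K + 1 with hLdef
      have heq : r (a+1) = -((p:ℤ) * r a) + δ a + Q * L := by rw [hLdef]; linarith [hK]
      have hdvd : (p:ℤ) ∣ (L - δ a) := by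
        refine ⟨-Y' - (p:ℤ) * X' + P * L, ?_⟩
        have h5 : (p:ℤ) * Y' = -((p:ℤ) * ((p:ℤ) * X')) + δ a + ((p:ℤ)*P - 1) * L := by
          rw [← hY', ← hX', ← hQP]; exact heq
        linarith [h5]
      have hm1 : (p:ℤ) * r a ≤ (p:ℤ) * (Q-1) := mul_le_mul_of_nonneg_left h2a (by omega)
      have hm2 : (p:ℤ) * 1 ≤ (p:ℤ) * r a := mul_le_mul_of_nonneg_left h1a (by omega)
      have habs' := abs_le.mp habs
      have hb1 : Q * L < Q * ((p:ℤ) + 1) := by linarith [heq, hm1, h2b, hd1, hQ2]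
      have hb2 : Q * 0 < Q * L := by linarith [heq, hm2, h1b, habs'.2]
      have hL1 : L < (p:ℤ) + 1 := lt_of_mul_lt_mul_left hb1 (by omega)
      have hL2 : 0 < L := lt_of_mul_lt_mul_left hb2 (by omega)
      have hLD : L = δ a := by
        have := Int.eq_zero_of_abs_lt_dvd hdvd (by rw [abs_lt]; constructor <;> omega)
        omega
      right
      rw [heq, hLD, abs_of_nonneg hd0, hQP]
      ring
    · -- FF : δ ≥ 0
      have hd0 : 0 ≤ δ a := (hCJδ a).2 hca
      have hta : (tv a : ℤ) = r a := by simp only [hrdef, if_neg hca]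
      have htb : (tv (a+1) : ℤ) = r (a+1) := by simp only [hrdef, if_neg hcb]
      rw [hta, htb] at hK
      set L : ℤ := K with hLdef
      have heq : r (a+1) = (p:ℤ) * r a - δ a - Q * L := by rw [hLdef]; linarith [hK]
      have hdvd : (p:ℤ) ∣ (L - δ a) := by
        refine ⟨Y' - (p:ℤ) * X' + P * L, ?_⟩
        have h5 : (p:ℤ) * Y' = (p:ℤ) * ((p:ℤ) * X') - δ a - ((p:ℤ)*P - 1) * L := by
          rw [← hY', ← hX', ← hQP]; exact heq
        linarith [h5]
      have hm1 : (p:ℤ) * r a ≤ (p:ℤ) * (Q-1) := mul_le_mul_of_nonneg_left h2a (by omega)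
      have hm2 : (p:ℤ) * 1 ≤ (p:ℤ) * r a := mul_le_mul_of_nonneg_left h1a (by omega)
      have habs' := abs_le.mp habs
      have hb1 : Q * L < Q * (p:ℤ) := by linarith [heq, hm1, hd0, h1b, hpZ]
      have hb2 : Q * (-1) < Q * L := by linarith [heq, hm2, habs'.2, h2b, hQ2]
      have hL1 : L < (p:ℤ) := lt_of_mul_lt_mul_left hb1 (by omega)
      have hL2 : -1 < L := lt_of_mul_lt_mul_left hb2 (by omega)
      have hLD : L = δ a := by
        have := Int.eq_zero_of_abs_lt_dvd hdvd (by rw [abs_lt]; constructor <;> omega)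
        omega
      left
      rw [heq, hLD, abs_of_nonneg hd0, hQP]
      ring
  -- descent
  have hdesc : ∀ m, m ≤ f → ∀ a, (p:ℤ)^m ∣ r (a + m) := by
    intro m
    induction m with
    | zero => intro _ a; simp
    | succ n ih =>
      intro hn a
      have hPsplit : P = (p:ℤ)^n * (p:ℤ)^(f-1-n) := by
        rw [hPdef, ← pow_add]
        congr 1
        omega
      obtain ⟨Z, hZ⟩ := ih (by omega) a
      have hra : a + (n+1) = (a + n) + 1 := by omega
      rcases hstep (a + n) with h | h <;> rw [hra]
      · refine ⟨Z - |δ (a+n)| * (p:ℤ)^(f-1-n), ?_⟩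
        rw [h, hZ, hPsplit, pow_succ]
        ring
      · refine ⟨-(Z - |δ (a+n)| * (p:ℤ)^(f-1-n)), ?_⟩
        rw [h, hZ, hPsplit, pow_succ]
        ring
  have hfinal := hdesc f le_rfl 0
  rw [zero_add] at hfinal
  obtain ⟨h1f, h2f, _⟩ := hr f
  have := Int.le_of_dvd (by omega) hfinal
  rw [hQdef] at h2f
  omega

end St4

namespace St4

set_option maxHeartbeats 1000000 in
lemma win (p f e : ℕ) [NeZero (2*f)] [NeZero (p^f - 1)] (hp : 2 ≤ p) (hf : 1 ≤ f)
    (he : p - 1 ≤ e) (c : ZMod (2 * f) → ℤ)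
    (hne : ∃ i, c i ≠ c (i + (f : ZMod (2 * f)))) (t : ℤ) (a : ℕ) (M : ℕ)
    (hM : M ≤ p^f - 1)
    (hMZ : ((M : ℕ) : ZMod (p^f - 1)) =
      ((p : ZMod (p^f - 1)))^((a + f - 1) % f)
        * ((t : ZMod (p^f - 1)) - ((Sg p f c (Jw f a) : ℤ) : ZMod (p^f - 1))))
    (hm0e : CondJ f c (((a + f - 1 : ℕ)) : ZMod (2*f)) → (dgt p M 0 : ℤ) ≠ (e:ℤ))
    (hm00 : ¬ CondJ f c (((a + f - 1 : ℕ)) : ZMod (2*f)) → dgt p M 0 ≠ 0) :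
    ∃ J : Finset (ZMod (2 * f)), (∀ i, i ∈ J ↔ i + (f : ZMod (2 * f)) ∉ J) ∧
      ∃ x : ZMod (2 * f) → ℤ, (∀ i, x (i + (f : ZMod (2 * f))) = x i) ∧
        Allowable f e c J x ∧
        (∑ i ∈ Finset.range (2 * f),
            if (i : ZMod (2 * f)) ∈ J then (p : ℤ) ^ (f - i % f) * c (i : ZMod (2 * f)) else 0) +
          (∑ i ∈ Finset.range f, (p : ℤ) ^ (f - i) * x (i : ZMod (2 * f)))
          ≡ t [ZMOD ((p : ℤ) ^ f - 1)] := by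
  have hpf1 : 1 ≤ p ^ f := Nat.one_le_pow _ _ (by omega)
  set d₀ := (a + f - 1) % f with hd₀
  have hd₀f : d₀ < f := Nat.mod_lt _ (by omega)
  set x : ZMod (2*f) → ℤ := fun i => (dgt p M ((d₀ + f - i.val % f) % f) : ℤ) with hxdef
  have hxle : ∀ i, x i ≤ (e : ℤ) := by
    intro i
    have h1 := dgt_le p M ((d₀ + f - i.val % f) % f) (by omega)
    have : (dgt p M ((d₀ + f - i.val % f) % f) : ℤ) ≤ ((p - 1 : ℕ) : ℤ) := by exact_mod_cast h1
    have h2 : ((p - 1 : ℕ) : ℤ) ≤ (e : ℤ) := by exact_mod_cast he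
    simp only [hxdef]
    omega
  -- value at the crossings
  have hxcr : ∀ i : ZMod (2*f), i.val % f = d₀ → x i = (dgt p M 0 : ℤ) := by
    intro i hi
    simp only [hxdef, hi]
    congr 2
    have : d₀ + f - d₀ = f := by omega
    rw [this, Nat.mod_self]
  have hvalmod : ∀ n : ℕ, ((n : ZMod (2*f))).val % f = n % f := by
    intro n
    rw [ZMod.val_natCast]
    exact Nat.mod_mod_of_dvd n ⟨2, by ring⟩
  refine ⟨Jw f a, fun i => Jw_compl f hf a i, x, ?_, ?_, ?_⟩
  · -- periodicity
    intro i
    simp only [hxdef]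
    congr 3
    rw [val_add_f f hf]
    by_cases h : i.val < f
    · rw [if_pos h, Nat.add_mod_right]
    · rw [if_neg h]
      conv_rhs => rw [show i.val = (i.val - f) + f by omega, Nat.add_mod_right]
  · -- allowable
    intro i
    refine ⟨by simp [hxdef], hxle i, ?_, ?_⟩
    · intro h1 h2
      have hieq : i = (((a + f - 1 : ℕ)) : ZMod (2*f)) := by
        rw [cross_out f hf a i h1 h2, show a + f - 1 = a + (f-1) by omega, Nat.cast_add]
      have hval : x i = (dgt p M 0 : ℤ) := by
        apply hxcr
        rw [hieq, hvalmod]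
      rw [hval, hieq]
      constructor
      · intro hcj
        exact hm0e hcj
      · intro hncj hx0
        exact (hm00 hncj) (by exact_mod_cast hx0)
    · intro h1 h2
      have hieq : i = (((a + 2*f - 1 : ℕ)) : ZMod (2*f)) := by
        rw [cross_in f hf a i h1 h2, show a + 2*f - 1 = a + (2*f-1) by omega, Nat.cast_add]
      have hieq2 : i = (((a + f - 1 : ℕ)) : ZMod (2*f)) + (f : ZMod (2*f)) := by
        rw [hieq, show a + 2*f - 1 = (a + f - 1) + f by omega, Nat.cast_add]
      have hcnd : CondJ f c i ↔ ¬ CondJ f c (((a + f - 1 : ℕ)) : ZMod (2*f)) := by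
        rw [hieq2]
        exact condJ_not_iff f hf c hne _
      have hval : x i = (dgt p M 0 : ℤ) := by
        apply hxcr
        rw [hieq, hvalmod, show a + 2*f - 1 = (a + f - 1) + f by omega, Nat.add_mod_right]
      rw [hval]
      constructor
      · intro hcj hx0
        exact (hm00 (hcnd.mp hcj)) (by exact_mod_cast hx0)
      · intro hncj
        have : CondJ f c (((a + f - 1 : ℕ)) : ZMod (2*f)) := by
          by_contra hc
          exact hncj (hcnd.mpr hc)
        exact hm0e this
  · -- the congruence
    have hmodcast : ((p:ℤ)^f - 1) = ((p^f - 1 : ℕ) : ℤ) := by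
      push_cast [Nat.cast_sub hpf1]
      ring
    rw [hmodcast]
    apply (ZMod.intCast_eq_intCast_iff _ _ _).mp
    have hsum1 : ∀ i ∈ Finset.range f,
        (p:ℤ)^(f-i) * x ((i:ℕ) : ZMod (2*f)) = (p:ℤ)^(f-i) * (dgt p M ((d₀ + f - i) % f) : ℤ) := by
      intro i hi
      rw [Finset.mem_range] at hi
      simp only [hxdef]
      rw [hvalmod i, Nat.mod_eq_of_lt hi]
    rw [Finset.sum_congr rfl hsum1]
    have hfoldA : (∑ i ∈ Finset.range (2*f),
        if ((i:ℕ) : ZMod (2*f)) ∈ Jw f a then (p:ℤ)^(f - i % f) * c ((i:ℕ) : ZMod (2*f)) else 0)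
        = Sg p f c (Jw f a) := rfl
    rw [hfoldA, Int.cast_add]
    have hexp : ∀ k, k < f → (f - (d₀+f-k) % f) % f = ((f-d₀)+k) % f := by
      intro k hk
      rcases le_or_gt k d₀ with h | h
      · have h1 : (d₀ + f - k) % f = d₀ - k := by
          rw [show d₀ + f - k = (d₀ - k) + f by omega, Nat.add_mod_right]
          exact Nat.mod_eq_of_lt (by omega)
        rw [h1, show f - (d₀ - k) = (f - d₀) + k by omega]
      · have h1 : (d₀ + f - k) % f = d₀ + f - k := Nat.mod_eq_of_lt (by omega)
        rw [h1, show f - (d₀ + f - k) = k - d₀ by omega,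
          show (f-d₀)+k = (k-d₀)+f by omega, Nat.add_mod_right]
    have hinv : ∀ i, i < f → (d₀ + f - (d₀ + f - i) % f) % f = i := by
      intro i hi
      rcases le_or_gt i d₀ with h | h
      · have h1 : (d₀ + f - i) % f = d₀ - i := by
          rw [show d₀ + f - i = (d₀ - i) + f by omega, Nat.add_mod_right]
          exact Nat.mod_eq_of_lt (by omega)
        rw [h1, show d₀ + f - (d₀ - i) = i + f by omega, Nat.add_mod_right]
        exact Nat.mod_eq_of_lt hi
      · have h1 : (d₀ + f - i) % f = d₀ + f - i := Nat.mod_eq_of_lt (by omega)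
        rw [h1, show d₀ + f - (d₀ + f - i) = i by omega]
        exact Nat.mod_eq_of_lt hi
    have hbij : ∑ i ∈ Finset.range f,
        ((p:ZMod (p^f-1)))^(f-i) * ((dgt p M ((d₀+f-i)%f) : ℕ) : ZMod (p^f-1))
        = ∑ k ∈ Finset.range f,
          ((p:ZMod (p^f-1)))^(f-(d₀+f-k)%f) * ((dgt p M k : ℕ) : ZMod (p^f-1)) := by
      apply Finset.sum_nbij' (fun i => (d₀+f-i)%f) (fun k => (d₀+f-k)%f)
      · intro i _
        exact Finset.mem_range.mpr (Nat.mod_lt _ (by omega))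
      · intro k _
        exact Finset.mem_range.mpr (Nat.mod_lt _ (by omega))
      · intro i hi
        exact hinv i (Finset.mem_range.mp hi)
      · intro k hk
        exact hinv k (Finset.mem_range.mp hk)
      · intro i hi
        rw [hinv i (Finset.mem_range.mp hi)]
    have hterm : ∀ k ∈ Finset.range f,
        ((p:ZMod (p^f-1)))^(f-(d₀+f-k)%f) * ((dgt p M k : ℕ) : ZMod (p^f-1))
        = ((p:ZMod (p^f-1)))^(f-d₀) * (((p:ZMod (p^f-1)))^k * ((dgt p M k : ℕ) : ZMod (p^f-1))) := by
      intro k hk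
      rw [zpow_congr p f hf hp _ ((f-d₀)+k) (hexp k (Finset.mem_range.mp hk)), pow_add]
      ring
    have hMlt : M < p^f := by omega
    have hMsum : ((∑ k ∈ Finset.range f, p^k * dgt p M k : ℕ) : ZMod (p^f-1)) = (M : ZMod (p^f-1)) := by
      rw [sum_dgt, Nat.mod_eq_of_lt hMlt]
    push_cast at hMsum ⊢
    rw [hbij, Finset.sum_congr rfl hterm, ← Finset.mul_sum, hMsum, hMZ]
    rw [← mul_assoc, ← pow_add, show (f-d₀)+d₀ = f by omega, zpow_f p f hf hp, one_mul]
    ring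
end St4

set_option maxHeartbeats 1600000 in
/-- if `e ≥ p−1` and `c_i ≠ c_{i+f}` for some `i`, then every residue class
`t (mod p^f−1)` is of the form `Σ_{i∈J} p^{f−π(i)} c_i + Σ_{i<f} p^{f−i} x_i` for some `J`
with `i ∈ J ↔ i+f ∉ J` and some allowable `x` with `x_{i+f} = x_i`. -/
theorem stmt_4 (p f e : ℕ) (hp : p.Prime) (hodd : Odd p) (hf : 1 ≤ f) (he : p - 1 ≤ e)
    (c : ZMod (2 * f) → ℤ) (hc : ∀ i, 0 ≤ c i ∧ c i ≤ (p : ℤ) - 1)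
    (hne : ∃ i, c i ≠ c (i + (f : ZMod (2 * f)))) (t : ℤ) :
    ∃ J : Finset (ZMod (2 * f)), (∀ i, i ∈ J ↔ i + (f : ZMod (2 * f)) ∉ J) ∧
      ∃ x : ZMod (2 * f) → ℤ, (∀ i, x (i + (f : ZMod (2 * f))) = x i) ∧
        Allowable f e c J x ∧
        (∑ i ∈ Finset.range (2 * f),
            if (i : ZMod (2 * f)) ∈ J then (p : ℤ) ^ (f - i % f) * c (i : ZMod (2 * f)) else 0) +
          (∑ i ∈ Finset.range f, (p : ℤ) ^ (f - i) * x (i : ZMod (2 * f)))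
          ≡ t [ZMOD ((p : ℤ) ^ f - 1)] := by
  classical
  haveI hnz2f : NeZero (2*f) := ⟨by omega⟩
  have hp2 : 2 ≤ p := hp.two_le
  have hpf1 : 1 ≤ p^f := Nat.one_le_pow _ _ (by omega)
  have hpfp : p ≤ p^f := by
    calc p = p^1 := (pow_one p).symm
    _ ≤ p^f := Nat.pow_le_pow_right (by omega) hf
  haveI hnzq : NeZero (p^f - 1) := ⟨by omega⟩
  by_contra hcon
  set tvZ : ℕ → ZMod (p^f - 1) := fun a =>
    ((p : ZMod (p^f - 1)))^((a + f - 1) % f)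
      * ((t : ZMod (p^f - 1)) - ((St4.Sg p f c (St4.Jw f a) : ℤ) : ZMod (p^f - 1))) with htvZ
  set tv : ℕ → ℕ := fun a => (tvZ a).val with htv
  set CJ : ℕ → Prop := fun a => CondJ f c (((a + f - 1 : ℕ)) : ZMod (2*f)) with hCJ
  set δ : ℕ → ℤ := fun a => c ((a : ZMod (2*f)) + (f : ZMod (2*f))) - c ((a : ZMod (2*f))) with hδdef
  have hwin : ∀ a M, M ≤ p^f - 1 → ((M : ℕ) : ZMod (p^f-1)) = tvZ a →
      (CJ a → (St4.dgt p M 0 : ℤ) ≠ (e:ℤ)) → (¬ CJ a → St4.dgt p M 0 ≠ 0) → False := by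
    intro a M h1 h2 h3 h4
    exact hcon (St4.win p f e hp2 hf he c hne t a M h1 h2 h3 h4)
  have hfailE : ∀ a, (CJ a → ((tv a % p : ℕ) : ℤ) = (e:ℤ)) ∧
      (¬ CJ a → (tv a % p = 0 ∧ tv a ≠ 0)) := by
    intro a
    have hMZa : ((tv a : ℕ) : ZMod (p^f-1)) = tvZ a := by
      simp only [htv]
      exact ZMod.natCast_zmod_val (tvZ a)
    have hMle : tv a ≤ p^f - 1 := by
      have := (tvZ a).val_lt
      simp only [htv]
      omega
    have hdgt0 : St4.dgt p (tv a) 0 = tv a % p := by simp [St4.dgt]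
    constructor
    · intro hcj
      by_contra hne'
      exact hwin a (tv a) hMle hMZa (fun _ => by rw [hdgt0]; exact fun h => hne' h)
        (fun h => absurd hcj h)
    · intro hncj
      constructor
      · by_contra hne'
        exact hwin a (tv a) hMle hMZa (fun h => absurd h hncj)
          (fun _ => by rw [hdgt0]; exact hne')
      · intro h0
        have htvZ0 : tvZ a = 0 := by
          rw [← (ZMod.val_eq_zero (tvZ a))]
          simp only [htv] at h0
          exact h0
        apply hwin a (p^f - 1) le_rfl ?_ (fun h => absurd h hncj) (fun _ => ?_)
        · rw [ZMod.natCast_self, htvZ0]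
        · rw [St4.dgt_pred p f 0 hp2 (by omega)]
          omega
  have hCJf : ∀ a, CJ (a + f) ↔ ¬ CJ a := by
    intro a
    simp only [hCJ]
    have hca : ((a + f + f - 1 : ℕ) : ZMod (2*f)) = (((a + f - 1 : ℕ)) : ZMod (2*f)) + (f : ZMod (2*f)) := by
      rw [show a + f + f - 1 = (a + f - 1) + f by omega, Nat.cast_add]
    rw [hca]
    exact St4.condJ_not_iff f hf c hne _
  have heq : e = p - 1 := by
    have hea : ∃ a, CJ a := by
      rcases em (CJ 0) with h | h
      · exact ⟨0, h⟩
      · exact ⟨0 + f, (hCJf 0).mpr h⟩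
    obtain ⟨a0, ha0⟩ := hea
    have h1 := (hfailE a0).1 ha0
    have h2 : tv a0 % p ≤ p - 1 := by
      have := Nat.mod_lt (tv a0) (show 0 < p by omega)
      omega
    have h3 : e = tv a0 % p := by exact_mod_cast h1.symm
    omega
  have hfail : ∀ a, (CJ a → tv a % p = p - 1) ∧ (¬ CJ a → (tv a % p = 0 ∧ tv a ≠ 0)) := by
    intro a
    refine ⟨fun h => ?_, (hfailE a).2⟩
    have h1 := (hfailE a).1 h
    have h2 : tv a % p = e := by exact_mod_cast h1
    omega
  have hδb : ∀ a, |δ a| ≤ (p:ℤ) - 1 := by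
    intro a
    have h1 := hc ((a : ZMod (2*f)) + (f : ZMod (2*f)))
    have h2 := hc ((a : ZMod (2*f)))
    rw [abs_le]
    constructor <;> simp only [hδdef] <;> linarith [h1.1, h1.2, h2.1, h2.2]
  have htvb : ∀ a, tv a ≤ p^f - 2 := by
    intro a
    have := (tvZ a).val_lt
    simp only [htv]
    omega
  have hrec : ∀ a, ((p^f - 1 : ℕ) : ℤ) ∣ ((p:ℤ) * tv a - δ a - tv (a+1)) := by
    intro a
    rw [← ZMod.intCast_zmod_eq_zero_iff_dvd]
    have hstep : tvZ (a+1) = (p : ZMod (p^f-1)) * tvZ a - ((δ a : ℤ) : ZMod (p^f-1)) := by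
      simp only [htvZ, hδdef]
      rw [St4.S_step p f hf hp2 c a]
      push_cast
      have hamod : a % f < f := Nat.mod_lt _ (by omega)
      have he1 : ((p : ZMod (p^f-1)))^((a+1+f-1) % f)
          = (p : ZMod (p^f-1)) * ((p : ZMod (p^f-1)))^((a+f-1) % f) := by
        rw [St4.zpow_congr p f hf hp2 ((a+1+f-1) % f) ((a+f-1) % f + 1)
          (by rw [Nat.mod_mod_of_dvd _ dvd_rfl, Nat.mod_add_mod, show a+f-1+1 = a+1+f-1 by omega]),
          pow_succ]
        ring
      have he2 : ((p : ZMod (p^f-1)))^((a+1+f-1) % f) * ((p : ZMod (p^f-1)))^(f - a % f) = 1 := by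
        rw [← pow_add, St4.zpow_congr p f hf hp2 ((a+1+f-1) % f + (f - a % f)) f
          (by
            rw [show a+1+f-1 = a+f by omega, Nat.add_mod_right,
              show a % f + (f - a % f) = f by omega]),
          St4.zpow_f p f hf hp2]
      linear_combination ((t : ZMod (p^f-1)) - ((St4.Sg p f c (St4.Jw f a) : ℤ) : ZMod (p^f-1))) * he1
        - ((c ((a : ZMod (2*f)) + (f : ZMod (2*f))) : ℤ) - (c ((a : ZMod (2*f))) : ℤ) : (ZMod (p^f-1))) * he2
    have hcast : (((p:ℤ) * tv a - δ a - tv (a+1) : ℤ) : ZMod (p^f-1))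
        = (p : ZMod (p^f-1)) * tvZ a - ((δ a : ℤ) : ZMod (p^f-1)) - tvZ (a+1) := by
      simp only [htv]
      push_cast [ZMod.natCast_zmod_val]
      ring
    rw [hcast, hstep]
    ring
  have hCJδ : ∀ a, (CJ a → δ a ≤ 0) ∧ (¬ CJ a → 0 ≤ δ a) := by
    intro a
    have hi1 : (((a + f - 1:ℕ)) : ZMod (2*f)) + 1 = (a : ZMod (2*f)) + (f:ZMod (2*f)) := by
      conv_rhs => rw [← Nat.cast_add, show a+f = (a+f-1)+1 by omega, Nat.cast_add, Nat.cast_one]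
    have hi2 : (((a + f - 1:ℕ)) : ZMod (2*f)) + 1 + (f:ZMod (2*f)) = (a : ZMod (2*f)) := by
      rw [hi1, add_assoc, St4.two_f_cast f, add_zero]
    constructor
    · intro hcj
      by_contra h
      push_neg at h
      have hlt : c ((((a+f-1:ℕ)):ZMod (2*f)) + 1 + (f:ZMod (2*f)))
          < c ((((a+f-1:ℕ)):ZMod (2*f)) + 1) := by
        rw [hi2, hi1]
        simp only [hδdef] at h
        linarith
      exact St4.not_condJ_of_gt f c _ hlt hcj
    · intro hncj
      by_contra h
      push_neg at h
      apply hncj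
      apply St4.condJ_of_lt f c
      rw [hi2, hi1]
      simp only [hδdef] at h
      linarith
  have hCJ0 : ∀ a, δ a = 0 → (CJ a ↔ CJ (a+1)) := by
    intro a h0
    have hi1 : (((a + f - 1:ℕ)) : ZMod (2*f)) + 1 = (a : ZMod (2*f)) + (f:ZMod (2*f)) := by
      conv_rhs => rw [← Nat.cast_add, show a+f = (a+f-1)+1 by omega, Nat.cast_add, Nat.cast_one]
    have hi2 : (((a + f - 1:ℕ)) : ZMod (2*f)) + 1 + (f:ZMod (2*f)) = (a : ZMod (2*f)) := by
      rw [hi1, add_assoc, St4.two_f_cast f, add_zero]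
    have hsh := St4.condJ_shift f c (((a+f-1:ℕ)):ZMod (2*f))
      (by rw [hi2, hi1]; simp only [hδdef] at h0; linarith)
    simp only [hCJ]
    rw [show a+1+f-1 = (a+f-1)+1 by omega, Nat.cast_add, Nat.cast_one]
    exact hsh
  exact St4.core p f hp2 hf tv CJ δ hδb htvb hrec hCJδ hCJ0 hfail
end

section
/- Let p be an odd prime and f ≥ 1, e ≥ 1 integers, and let c_0, …, c_{2f−1} be integers with 0 ≤ c_i ≤ p−1 (indices modulo 2f). Let J ⊆ ℤ/2fℤ satisfy (i ∈ J if and only if i+f ∈ J) for all i, and let x_0, …, x_{2f−1} be integers with x_i + x_{i+f} = e for all i. Then t := Ψ(J,x) satisfies (p^f+1)·t ≡ e·(p + p^2 + ⋯ + p^{2f}) + (p^f+1)·C (mod p^{2f}−1). -/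
/-!
With `W(w) := Σ_{i<2f} p^(2f-i) w_i` we have `C = W(c)` and `Ψ = W(w)`, where
`w_i = (if i ∈ J then c_i else c_(i+f)) + x_i`. Modulo `p^(2f) - 1` the powers of `p` have period
`2f`, so multiplying `W(w)` by `p^f` shifts the index of `w` by `f`, and
`(p^f + 1) Ψ ≡ W(w(· + f) + w)`. Because `J` is stable under `i ↦ i + f` and
`x_i + x_(i+f) = e`, `w_(i+f) + w_i = c_i + c_(i+f) + e`; the same shift turns `W(c(· + f))` back
into `p^f C`.
-/

open Finset

section TwistedSum

variable {R : Type*} [CommSemiring R]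

def twistedSum (u : R) (n : ℕ) (w : ZMod n → R) : R :=
  ∑ i ∈ range n, u ^ (n - i) * w i

theorem twistedSum_add (u : R) (n : ℕ) (v w : ZMod n → R) :
    twistedSum u n (fun i => v i + w i) = twistedSum u n v + twistedSum u n w := by
  simp only [twistedSum, mul_add, sum_add_distrib]

theorem twistedSum_const (u : R) (n : ℕ) (r : R) :
    twistedSum u n (fun _ => r) = r * ∑ j ∈ Icc 1 n, u ^ j := by
  rw [twistedSum, ← sum_mul, mul_comm]
  congr 1
  refine sum_nbij' (fun i => n - i) (fun j => n - j) ?_ ?_ ?_ ?_ ?_ <;>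
    intro i hi <;> simp only [mem_range, mem_Icc] at hi ⊢ <;> omega

theorem twistedSum_comp_add_one {u : R} {n : ℕ} (hu : u ^ n = 1)
    (w : ZMod n → R) : twistedSum u n (fun i => w (i + 1)) = u * twistedSum u n w := by
  rcases n with _ | m
  · simp [twistedSum]
  -- the last term `u w_(m+1) = u w_0` on the left is the first term `u · u^(m+1) w_0` on the right
  simp only [twistedSum]
  conv_lhs => rw [sum_range_succ]
  conv_rhs => rw [sum_range_succ', mul_add, mul_sum]
  have hlast : ((m : ZMod (m + 1)) + 1) = 0 := by exact_mod_cast ZMod.natCast_self (m + 1)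
  rw [hlast, Nat.add_sub_cancel_left, Nat.sub_zero, hu, one_mul, pow_one, Nat.cast_zero]
  congr 1
  refine sum_congr rfl fun i hi => ?_
  rw [Nat.add_sub_add_right, show m + 1 - i = m - i + 1 by have := mem_range.mp hi; omega]
  push_cast
  ring

theorem twistedSum_comp_add_natCast {u : R} {n : ℕ} (hu : u ^ n = 1)
    (w : ZMod n → R) (k : ℕ) :
    twistedSum u n (fun i => w (i + k)) = u ^ k * twistedSum u n w := by
  induction k with
  | zero => simp
  | succ k ih =>
    have := twistedSum_comp_add_one hu (fun i => w (i + k))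
    simp only [ih, add_assoc, add_comm (1 : ZMod n)] at this
    rw [pow_succ', mul_assoc, ← this]
    push_cast
    rfl

theorem twistedSum_comp_add_natCast_modEq (q : ℤ) (n : ℕ) (w : ZMod n → ℤ) (k : ℕ) :
    q ^ k * twistedSum q n w ≡ twistedSum q n (fun i => w (i + k)) [ZMOD q ^ n - 1] := by
  set m := (q ^ n - 1).natAbs
  have hu : (q : ZMod m) ^ n = 1 := by
    rw [← Int.cast_pow, ← Int.cast_one, ZMod.intCast_eq_intCast_iff_dvd_sub]
    exact Int.natAbs_dvd.mpr (dvd_sub_comm.mp dvd_rfl)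
  have := twistedSum_comp_add_natCast hu (fun i => (w i : ZMod m)) k
  rw [Int.modEq_iff_dvd, ← Int.natAbs_dvd, ← ZMod.intCast_eq_intCast_iff_dvd_sub]
  simp only [twistedSum] at this ⊢
  push_cast
  exact this.symm

end TwistedSum

theorem stmt_7_general (p f e : ℕ)
    (c : ZMod (2 * f) → ℤ)
    (J : Finset (ZMod (2 * f))) (hJ : ∀ i, i ∈ J ↔ i + (f : ZMod (2 * f)) ∈ J)
    (x : ZMod (2 * f) → ℤ) (hx : ∀ i, x i + x (i + (f : ZMod (2 * f))) = (e : ℤ)) :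
    ((p : ℤ) ^ f + 1) * Psi p f c J x ≡
      (e : ℤ) * (∑ j ∈ Finset.Icc 1 (2 * f), (p : ℤ) ^ j) + ((p : ℤ) ^ f + 1) * Cconst p f c
      [ZMOD ((p : ℤ) ^ (2 * f) - 1)] := by
  set a : ZMod (2 * f) → ℤ := fun i => if i ∈ J then c i else c (i + f)
  have hPsi : Psi p f c J x = twistedSum (p : ℤ) (2 * f) (fun i => a i + x i) := by
    rw [twistedSum_add, Psi, twistedSum, twistedSum]
    simp only [a, mul_ite]
  have hC : Cconst p f c = twistedSum (p : ℤ) (2 * f) c := rfl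
  have hff : (f : ZMod (2 * f)) + f = 0 := by
    rw [← two_mul]; exact_mod_cast ZMod.natCast_self (2 * f)
  have hsym : ∀ i, a (i + f) + x (i + f) + (a i + x i) = c i + c (i + f) + e := by
    intro i
    have hJi := hJ i
    rw [← hx i]
    by_cases hi : i ∈ J <;> simp only [a, hi, ← hJi, if_true, if_false, add_assoc, hff,
      add_zero] <;> ring
  calc ((p : ℤ) ^ f + 1) * Psi p f c J x
      = (p : ℤ) ^ f * Psi p f c J x + Psi p f c J x := by ring
    _ ≡ twistedSum (p : ℤ) (2 * f) (fun i => a (i + f) + x (i + f)) + Psi p f c J x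
        [ZMOD ((p : ℤ) ^ (2 * f) - 1)] := by
      rw [hPsi]
      exact (twistedSum_comp_add_natCast_modEq _ _ _ f).add_right _
    _ = twistedSum (p : ℤ) (2 * f) c + twistedSum (p : ℤ) (2 * f) (fun i => c (i + f))
        + e * ∑ j ∈ Icc 1 (2 * f), (p : ℤ) ^ j := by
      rw [hPsi, ← twistedSum_add, funext hsym, twistedSum_add, twistedSum_add, twistedSum_const]
    _ ≡ Cconst p f c + (p : ℤ) ^ f * Cconst p f c + e * ∑ j ∈ Icc 1 (2 * f), (p : ℤ) ^ j
        [ZMOD ((p : ℤ) ^ (2 * f) - 1)] := by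
      rw [hC]
      exact ((twistedSum_comp_add_natCast_modEq _ _ _ f).symm.add_left _).add_right _
    _ = _ := by ring

/-- if `i ∈ J ↔ i+f ∈ J` for all `i` and `x_i + x_{i+f} = e` for all `i`,
then `t := Ψ(J,x)` satisfies `(p^f+1)t ≡ e(p + p² + ⋯ + p^{2f}) + (p^f+1)C (mod p^{2f}−1)`. -/
theorem stmt_7 (p f e : ℕ) (hp : p.Prime) (hodd : Odd p) (hf : 1 ≤ f) (he : 1 ≤ e)
    (c : ZMod (2 * f) → ℤ) (hc : ∀ i, 0 ≤ c i ∧ c i ≤ (p : ℤ) - 1)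
    (J : Finset (ZMod (2 * f))) (hJ : ∀ i, i ∈ J ↔ i + (f : ZMod (2 * f)) ∈ J)
    (x : ZMod (2 * f) → ℤ) (hx : ∀ i, x i + x (i + (f : ZMod (2 * f))) = (e : ℤ)) :
    ((p : ℤ) ^ f + 1) * Psi p f c J x ≡
      (e : ℤ) * (∑ j ∈ Finset.Icc 1 (2 * f), (p : ℤ) ^ j) + ((p : ℤ) ^ f + 1) * Cconst p f c
      [ZMOD ((p : ℤ) ^ (2 * f) - 1)] :=
  stmt_7_general p f e c J hJ x hx
end

section
/- Let p be an odd prime, f ≥ 1 an integer, and e ≥ p−1 an integer. Let c_0, …, c_{2f−1} be integers with 0 ≤ c_i ≤ p−1 (indices modulo 2f), and suppose c_i ≠ c_{i+f} for some i. Then for every integer t satisfying (p^f+1)·t ≡ e·(p + p^2 + ⋯ + p^{2f}) + (p^f+1)·C (mod p^{2f}−1), there exist a subset J ⊆ ℤ/2fℤ with (i ∈ J if and only if i+f ∈ J) for all i, and an allowable list x_0, …, x_{2f−1} for J and c with x_i + x_{i+f} = e for all i, such that Ψ(J,x) ≡ t (mod p^{2f}−1). -/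
section AuxStmt8

open Finset

open Finset

/-- digit reconstruction -/
lemma aux_digit (p : ℕ) (hp : 0 < p) : ∀ (n N : ℕ), N < p ^ n →
    ∑ j ∈ range n, p ^ j * (N / p ^ j % p) = N := by
  intro n
  induction n with
  | zero => intro N hN; simp at hN ⊢; omega
  | succ n ih =>
    intro N hN
    rw [Finset.sum_range_succ']
    have h2 : ∑ i ∈ range n, p ^ (i+1) * (N / p ^ (i+1) % p)
        = p * ∑ i ∈ range n, p ^ i * ((N / p) / p ^ i % p) := by
      rw [Finset.mul_sum]
      refine Finset.sum_congr rfl fun i _ => ?_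
      rw [pow_succ', Nat.div_div_eq_div_mul]; ring
    rw [h2, ih (N / p) (Nat.div_lt_of_lt_mul (by rwa [← pow_succ']))]
    simp only [pow_zero, one_mul, Nat.pow_zero, Nat.div_one]
    exact Nat.div_add_mod N p

/-- base-p rep with small digits is zero iff all digits are zero -/
lemma aux_nonzero (p : ℕ) (hp : 2 ≤ p) : ∀ (n : ℕ) (a : ℕ → ℤ),
    (∀ i, i < n → |a i| ≤ (p : ℤ) - 1) →
    (∑ j ∈ Finset.range n, (p : ℤ) ^ j * a j) = 0 → ∀ i, i < n → a i = 0 := by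
  intro n
  induction n with
  | zero => intro a _ _ i hi; omega
  | succ n ih =>
    intro a ha hsum i hi
    rw [Finset.sum_range_succ'] at hsum
    have h2 : ∑ i ∈ Finset.range n, (p:ℤ) ^ (i+1) * a (i+1)
        = (p:ℤ) * ∑ i ∈ Finset.range n, (p:ℤ) ^ i * a (i+1) := by
      rw [Finset.mul_sum]; exact Finset.sum_congr rfl fun i _ => by ring
    rw [h2] at hsum
    simp only [pow_zero, one_mul] at hsum
    have hdvd : (p:ℤ) ∣ a 0 := ⟨-∑ i ∈ Finset.range n, (p:ℤ) ^ i * a (i+1), by linarith⟩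
    have ha0 : a 0 = 0 := by
      have := ha 0 (by omega)
      rcases hdvd with ⟨k, hk⟩
      have hp' : (2:ℤ) ≤ p := by exact_mod_cast hp
      rcases lt_trichotomy k 0 with h | h | h
      · nlinarith [abs_le.1 this]
      · simp [hk, h]
      · nlinarith [abs_le.1 this]
    rw [ha0] at hsum
    have hsum : ∑ j ∈ Finset.range n, (p:ℤ) ^ j * a (j+1) = 0 := by
      have hp' : (0:ℤ) < p := by exact_mod_cast (by omega : 0 < p)
      have := mul_eq_zero.1 (by linarith : (p:ℤ) * ∑ i ∈ Finset.range n, (p:ℤ) ^ i * a (i+1) = 0)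
      rcases this with h | h
      · exact absurd h (by positivity)
      · exact h
    rcases Nat.eq_zero_or_pos i with h | h
    · rw [h]; exact ha0
    · obtain ⟨j, rfl⟩ : ∃ j, i = j + 1 := ⟨i - 1, by omega⟩
      exact ih (fun k => a (k+1)) (fun k hk => ha (k+1) (by omega)) hsum j (by omega)

/-- bound on base-p representations -/
lemma aux_bound (p : ℕ) (hp : 2 ≤ p) (n : ℕ) (a : ℕ → ℤ)
    (ha : ∀ i, i < n → |a i| ≤ (p : ℤ) - 1) :
    |∑ j ∈ Finset.range n, (p : ℤ) ^ j * a j| ≤ (p:ℤ) ^ n - 1 := by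
  have hp' : (2:ℤ) ≤ p := by exact_mod_cast hp
  calc |∑ j ∈ Finset.range n, (p : ℤ) ^ j * a j|
      ≤ ∑ j ∈ Finset.range n, |(p : ℤ) ^ j * a j| := Finset.abs_sum_le_sum_abs _ _
    _ ≤ ∑ j ∈ Finset.range n, (p:ℤ) ^ j * ((p:ℤ) - 1) := by
        refine Finset.sum_le_sum fun j hj => ?_
        rw [abs_mul, abs_pow, abs_of_nonneg (by positivity : (0:ℤ) ≤ (p:ℤ))]
        exact mul_le_mul_of_nonneg_left (ha j (Finset.mem_range.1 hj)) (by positivity)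
    _ = (p:ℤ) ^ n - 1 := by rw [← Finset.sum_mul, geom_sum_mul]

/-- p^f + 1 does not divide p*W for W nonzero and small -/
lemma aux_not_dvd (p f : ℕ) (hp : 2 ≤ p) (hf : 1 ≤ f) (W : ℤ) (hW : W ≠ 0)
    (hWb : |W| ≤ (p:ℤ) ^ f - 1) : ¬ ((p:ℤ) ^ f + 1) ∣ ((p:ℤ) * W) := by
  intro ⟨k, hk⟩
  have hp' : (2:ℤ) ≤ p := by exact_mod_cast hp
  have hq : (2:ℤ) ≤ (p:ℤ) ^ f := by
    calc (2:ℤ) ≤ (p:ℤ) ^ 1 := by simpa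
    _ ≤ (p:ℤ) ^ f := pow_le_pow_right₀ (by linarith) hf
  have hcop : IsCoprime (p:ℤ) ((p:ℤ) ^ f + 1) := by
    refine ⟨-(p:ℤ) ^ (f - 1), 1, ?_⟩
    have : (p:ℤ) ^ (f-1) * p = (p:ℤ) ^ f := by
      rw [← pow_succ]; congr 1; omega
    linarith
  have hpk : (p:ℤ) ∣ k := by
    refine (IsCoprime.dvd_of_dvd_mul_left hcop ⟨W, ?_⟩)
    linarith [hk]
  have hk0 : k ≠ 0 := by
    rintro rfl
    simp at hk
    rcases hk with h | h
    · linarith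
    · exact hW h
  have hkabs : (p:ℤ) ≤ |k| := by
    rcases hpk with ⟨m, rfl⟩
    have hm : m ≠ 0 := by rintro rfl; simp at hk0
    rw [abs_mul, abs_of_nonneg (by positivity : (0:ℤ) ≤ (p:ℤ))]
    nlinarith [abs_pos.2 hm, Int.one_le_abs (by simpa using hm : m ≠ 0)]
  have h1 : |(p:ℤ) * W| = ((p:ℤ)^f + 1) * |k| := by
    rw [hk, abs_mul, abs_of_nonneg (by linarith : (0:ℤ) ≤ (p:ℤ)^f + 1)]
  have h2 : |(p:ℤ) * W| ≤ (p:ℤ) * ((p:ℤ)^f - 1) := by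
    rw [abs_mul, abs_of_nonneg (by positivity : (0:ℤ) ≤ (p:ℤ))]
    exact mul_le_mul_of_nonneg_left hWb (by positivity)
  nlinarith

/-- find the digit value N -/
lemma aux_findN (p f : ℕ) (hp : 2 ≤ p) (hf : 1 ≤ f) (r : ℤ)
    (hr : ¬ ((p:ℤ) ^ f + 1) ∣ (r + p)) :
    ∃ N : ℕ, N < p ^ f ∧ ((p:ℤ) ^ f + 1) ∣ ((p:ℤ) * N - r) := by
  set q : ℤ := (p:ℤ) ^ f with hq
  have hp' : (2:ℤ) ≤ p := by exact_mod_cast hp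
  have hq2 : (2:ℤ) ≤ q := by
    calc (2:ℤ) ≤ (p:ℤ) ^ 1 := by simpa
    _ ≤ (p:ℤ) ^ f := pow_le_pow_right₀ (by linarith) hf
  have hqpos : (0:ℤ) < q + 1 := by linarith
  set A : ℤ := (r * (-(p:ℤ) ^ (f - 1))) % (q + 1) with hA
  have hA0 : 0 ≤ A := Int.emod_nonneg _ (by linarith)
  have hA1 : A < q + 1 := Int.emod_lt_of_pos _ hqpos
  have hpf : (p:ℤ) ^ (f-1) * p = q := by
    rw [hq, ← pow_succ]; congr 1; omega
  have hBA : (q + 1) ∣ (r * (-(p:ℤ) ^ (f - 1)) - A) := by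
    rw [hA, Int.emod_def]
    refine ⟨(r * -↑p ^ (f - 1)) / (q+1), by ring⟩
  have hdvd : (q + 1) ∣ ((p:ℤ) * A - r) := by
    rcases hBA with ⟨k, hk⟩
    refine ⟨-(p:ℤ) * k - r, ?_⟩
    have : (p:ℤ) * A = (p:ℤ) * (r * (-(p:ℤ) ^ (f - 1))) - (p:ℤ) * ((q+1) * k) := by
      rw [← hk]; ring
    rw [this]
    have h2 : (p:ℤ) * (r * (-(p:ℤ) ^ (f - 1))) = -(q * r) := by
      rw [← hpf]; ring
    rw [h2]; ring
  have hAq : A ≠ q := by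
    intro hAeq
    rw [hAeq] at hdvd
    apply hr
    rcases hdvd with ⟨k, hk⟩
    refine ⟨(p:ℤ) - k, ?_⟩
    have : (p:ℤ) * q - r = (q+1) * k := hk
    nlinarith [this]
  have hAq' : A < q := lt_of_le_of_ne (by omega) hAq
  refine ⟨A.toNat, ?_, ?_⟩
  · have : ((A.toNat : ℤ)) < ((p ^ f : ℕ) : ℤ) := by
      push_cast
      rw [Int.toNat_of_nonneg hA0]; exact hAq'
    exact_mod_cast this
  · rw [Int.toNat_of_nonneg hA0]; exact hdvd

lemma aux_split {M : Type*} [AddCommMonoid M] (f : ℕ) (g : ℕ → M) :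
    ∑ i ∈ Finset.range (2 * f), g i
      = ∑ i ∈ Finset.range f, g i + ∑ i ∈ Finset.range f, g (f + i) := by
  rw [two_mul]; exact Finset.sum_range_add g f f

def digitx (p f e N : ℕ) : ZMod (2 * f) → ℤ := fun i =>
  if i.val < f then ((N / p ^ (f - 1 - i.val) % p : ℕ) : ℤ)
  else (e : ℤ) - ((N / p ^ (f - 1 - (i.val - f)) % p : ℕ) : ℤ)

lemma digitx_bounds (p f e N : ℕ) (hp : 1 ≤ p) (he : p - 1 ≤ e) (i : ZMod (2*f)) :
    0 ≤ digitx p f e N i ∧ digitx p f e N i ≤ (e:ℤ) := by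
  have hd : ∀ j : ℕ, (N / p ^ j % p) ≤ e := fun j => by
    have := Nat.mod_lt (N / p ^ j) (show 0 < p by omega); omega
  unfold digitx; split
  · exact ⟨by positivity, by exact_mod_cast hd _⟩
  · constructor
    · have h1 : ((N / p ^ (f-1-((ZMod.val i)-f)) % p : ℕ) : ℤ) ≤ (e:ℤ) := by exact_mod_cast hd _
      linarith
    · have h2 : (0:ℤ) ≤ ((N / p ^ (f-1-((ZMod.val i)-f)) % p : ℕ) : ℤ) := by positivity
      linarith

lemma digitx_pair (p f e N : ℕ) (hf : 1 ≤ f) (i : ZMod (2*f)) :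
    digitx p f e N i + digitx p f e N (i + (f : ZMod (2*f))) = (e:ℤ) := by
  haveI : NeZero (2*f) := ⟨by omega⟩
  have hvf : (f : ZMod (2*f)).val = f := ZMod.val_natCast_of_lt (by omega)
  have hv : i.val < 2*f := ZMod.val_lt i
  have hadd : (i + (f : ZMod (2*f))).val = (i.val + f) % (2*f) := by rw [ZMod.val_add, hvf]
  by_cases h : i.val < f
  · have h2 : (i.val + f) % (2*f) = i.val + f := Nat.mod_eq_of_lt (by omega)
    unfold digitx
    rw [hadd, h2, if_pos h, if_neg (by omega)]
    have h3 : i.val + f - f = i.val := by omega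
    rw [h3]; ring
  · have h2 : (i.val + f) % (2*f) = i.val - f := by
      rw [Nat.mod_eq_sub_mod (by omega)]
      have h4 : i.val + f - 2*f = i.val - f := by omega
      rw [h4]; exact Nat.mod_eq_of_lt (by omega)
    unfold digitx
    rw [hadd, h2, if_neg h, if_pos (by omega)]
    ring

lemma digitx_sum (p f e N : ℕ) (hp : 1 ≤ p) (hf : 1 ≤ f) (hN : N < p ^ f) :
    ∑ i ∈ Finset.range (2*f), (p:ℤ) ^ (2*f - i) * digitx p f e N ((i : ℕ) : ZMod (2*f))
      = (e:ℤ) * (∑ i ∈ Finset.range f, (p:ℤ)^(i+1))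
        + ((p:ℤ)^f - 1) * ((p:ℤ) * N) := by
  haveI : NeZero (2*f) := ⟨by omega⟩
  set d : ℕ → ℤ := fun i => ((N / p ^ (f - 1 - i) % p : ℕ) : ℤ) with hd
  have hval : ∀ i : ℕ, i < 2*f → ((i : ZMod (2*f))).val = i :=
    fun i hi => ZMod.val_natCast_of_lt hi
  -- evaluate digitx at the two halves
  have hx1 : ∀ i : ℕ, i < f → digitx p f e N ((i : ℕ) : ZMod (2*f)) = d i := by
    intro i hi
    unfold digitx
    rw [hval i (by omega), if_pos hi]
  have hx2 : ∀ i : ℕ, i < f → digitx p f e N (((f + i : ℕ)) : ZMod (2*f)) = (e:ℤ) - d i := by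
    intro i hi
    unfold digitx
    rw [hval (f+i) (by omega), if_neg (by omega)]
    have : f + i - f = i := by omega
    rw [this]
  rw [aux_split f (fun i => (p:ℤ) ^ (2*f - i) * digitx p f e N ((i : ℕ) : ZMod (2*f)))]
  have hs1 : ∑ i ∈ Finset.range f, (p:ℤ) ^ (2*f - i) * digitx p f e N ((i : ℕ) : ZMod (2*f))
      = (p:ℤ)^f * ∑ i ∈ Finset.range f, (p:ℤ) ^ (f - i) * d i := by
    rw [Finset.mul_sum]
    refine Finset.sum_congr rfl fun i hi => ?_
    have hi' := Finset.mem_range.1 hi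
    rw [hx1 i hi']
    have h2 : 2*f - i = f + (f - i) := by omega
    rw [h2, pow_add]; ring
  have hs2 : ∑ i ∈ Finset.range f, (p:ℤ) ^ (2*f - (f + i)) * digitx p f e N (((f + i : ℕ)) : ZMod (2*f))
      = (e:ℤ) * (∑ i ∈ Finset.range f, (p:ℤ)^(f - i))
        - ∑ i ∈ Finset.range f, (p:ℤ) ^ (f - i) * d i := by
    rw [Finset.mul_sum, ← Finset.sum_sub_distrib]
    refine Finset.sum_congr rfl fun i hi => ?_
    have hi' := Finset.mem_range.1 hi
    rw [hx2 i hi']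
    have h2 : 2*f - (f + i) = f - i := by omega
    rw [h2]; ring
  rw [hs1, hs2]
  have key1 : ∑ i ∈ Finset.range f, (p:ℤ) ^ (f - i) * d i = (p:ℤ) * N := by
    have hrefl := Finset.sum_range_reflect (fun j => (p:ℤ)^(j+1) * ((N / p ^ j % p : ℕ) : ℤ)) f
    have hL : ∑ i ∈ Finset.range f, (p:ℤ) ^ (f - i) * d i
        = ∑ j ∈ Finset.range f, (p:ℤ)^((f-1-j)+1) * ((N / p ^ (f-1-j) % p : ℕ) : ℤ) := by
      refine Finset.sum_congr rfl fun i hi => ?_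
      have hi' := Finset.mem_range.1 hi
      have : f - i = (f - 1 - i) + 1 := by omega
      rw [hd, this]
    rw [hL, hrefl]
    have : ∑ j ∈ Finset.range f, (p:ℤ)^(j+1) * ((N / p ^ j % p : ℕ) : ℤ)
        = (p:ℤ) * ∑ j ∈ Finset.range f, (p:ℤ)^j * ((N / p ^ j % p : ℕ) : ℤ) := by
      rw [Finset.mul_sum]; exact Finset.sum_congr rfl fun j _ => by ring
    rw [this]
    congr 1
    have hnat := aux_digit p (by omega) f N hN
    calc ∑ j ∈ Finset.range f, (p:ℤ)^j * ((N / p ^ j % p : ℕ) : ℤ)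
        = ((∑ j ∈ Finset.range f, p^j * (N / p ^ j % p) : ℕ) : ℤ) := by push_cast; ring
      _ = (N : ℤ) := by rw [hnat]
  have key2 : ∑ i ∈ Finset.range f, (p:ℤ)^(f - i) = ∑ i ∈ Finset.range f, (p:ℤ)^(i+1) := by
    have hrefl := Finset.sum_range_reflect (fun j => (p:ℤ)^(j+1)) f
    rw [← hrefl]
    refine Finset.sum_congr rfl fun i hi => ?_
    have hi' := Finset.mem_range.1 hi
    congr 1; omega
  rw [key1, key2]; ring

lemma hidx2f (f : ℕ) : (f : ZMod (2*f)) + (f : ZMod (2*f)) = 0 := by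
  rw [← Nat.cast_add, ← two_mul]; exact ZMod.natCast_self _

lemma hidx1 (f i : ℕ) : (((f + i : ℕ)) : ZMod (2*f)) = ((i:ℕ) : ZMod (2*f)) + (f : ZMod (2*f)) := by
  push_cast; ring

lemma hidx2 (f i : ℕ) :
    (((f + i : ℕ)) : ZMod (2*f)) + (f : ZMod (2*f)) = ((i:ℕ) : ZMod (2*f)) := by
  rw [hidx1]
  calc ((i:ℕ) : ZMod (2*f)) + (f : ZMod (2*f)) + (f : ZMod (2*f))
      = ((i:ℕ) : ZMod (2*f)) + ((f : ZMod (2*f)) + (f : ZMod (2*f))) := by ring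
    _ = ((i:ℕ) : ZMod (2*f)) := by rw [hidx2f, add_zero]

lemma Cdecomp (p f : ℕ) (c : ZMod (2*f) → ℤ) :
    Cconst p f c
      = (p:ℤ)^f * (∑ i ∈ Finset.range f, (p:ℤ)^(f-i) * c ((i:ℕ) : ZMod (2*f)))
        + ∑ i ∈ Finset.range f, (p:ℤ)^(f-i) * c (((i:ℕ) : ZMod (2*f)) + (f : ZMod (2*f))) := by
  unfold Cconst
  rw [aux_split f (fun i => (p:ℤ)^(2*f-i) * c ((i:ℕ) : ZMod (2*f))), Finset.mul_sum]
  congr 1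
  · refine Finset.sum_congr rfl fun i hi => ?_
    have hi' := Finset.mem_range.1 hi
    have h2 : 2*f - i = f + (f - i) := by omega
    rw [h2, pow_add]; ring
  · refine Finset.sum_congr rfl fun i hi => ?_
    have hi' := Finset.mem_range.1 hi
    have h2 : 2*f - (f + i) = f - i := by omega
    rw [h2, hidx1]

lemma Cdecomp' (p f : ℕ) (c : ZMod (2*f) → ℤ) :
    ∑ i ∈ Finset.range (2*f), (p:ℤ)^(2*f-i) * c (((i:ℕ) : ZMod (2*f)) + (f : ZMod (2*f)))
      = (p:ℤ)^f * (∑ i ∈ Finset.range f, (p:ℤ)^(f-i) * c (((i:ℕ):ZMod (2*f)) + (f : ZMod (2*f))))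
        + ∑ i ∈ Finset.range f, (p:ℤ)^(f-i) * c ((i:ℕ) : ZMod (2*f)) := by
  rw [aux_split f (fun i => (p:ℤ)^(2*f-i) * c (((i:ℕ) : ZMod (2*f)) + (f : ZMod (2*f)))),
    Finset.mul_sum]
  congr 1
  · refine Finset.sum_congr rfl fun i hi => ?_
    have hi' := Finset.mem_range.1 hi
    have h2 : 2*f - i = f + (f - i) := by omega
    rw [h2, pow_add]; ring
  · refine Finset.sum_congr rfl fun i hi => ?_
    have hi' := Finset.mem_range.1 hi
    have h2 : 2*f - (f + i) = f - i := by omega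
    rw [h2, hidx2]

lemma Ssum_s8 (p f : ℕ) :
    ∑ j ∈ Finset.Icc 1 (2*f), (p:ℤ)^j
      = ((p:ℤ)^f + 1) * ∑ i ∈ Finset.range f, (p:ℤ)^(i+1) := by
  have h1 : Finset.Icc 1 (2*f) = Finset.Ico 1 (2*f + 1) := by
    rw [Finset.Ico_add_one_right_eq_Icc]
  rw [h1, Finset.sum_Ico_eq_sum_range]
  have h2 : 2*f + 1 - 1 = 2*f := by omega
  rw [h2, aux_split f (fun i => (p:ℤ)^(1+i))]
  have h4 : ∀ i : ℕ, ((p:ℤ)^f + 1) * (p:ℤ)^(i+1) = (p:ℤ)^(1+(f+i)) + (p:ℤ)^(1+i) := by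
    intro i
    have h3 : 1 + (f + i) = f + (i + 1) := by omega
    rw [h3, pow_add, add_comm 1 i]; ring
  rw [Finset.mul_sum]
  rw [Finset.sum_congr rfl fun i (_ : i ∈ Finset.range f) => h4 i, Finset.sum_add_distrib]
  ring

end AuxStmt8

/-- if `e ≥ p−1` and `c_i ≠ c_{i+f}` for some `i`, then every `t` with
`(p^f+1)t ≡ e(p + ⋯ + p^{2f}) + (p^f+1)C (mod p^{2f}−1)` is congruent to `Ψ(J,x)` for
some `J` with `i ∈ J ↔ i+f ∈ J` and some allowable `x` with `x_i + x_{i+f} = e`. -/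


theorem stmt_8 (p f e : ℕ) (hp : p.Prime) (hodd : Odd p) (hf : 1 ≤ f) (he : p - 1 ≤ e)
    (c : ZMod (2 * f) → ℤ) (hc : ∀ i, 0 ≤ c i ∧ c i ≤ (p : ℤ) - 1)
    (hne : ∃ i, c i ≠ c (i + (f : ZMod (2 * f))))
    (t : ℤ)
    (ht : ((p : ℤ) ^ f + 1) * t ≡
      (e : ℤ) * (∑ j ∈ Finset.Icc 1 (2 * f), (p : ℤ) ^ j) + ((p : ℤ) ^ f + 1) * Cconst p f c
      [ZMOD ((p : ℤ) ^ (2 * f) - 1)]) :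
    ∃ J : Finset (ZMod (2 * f)), (∀ i, i ∈ J ↔ i + (f : ZMod (2 * f)) ∈ J) ∧
      ∃ x : ZMod (2 * f) → ℤ, Allowable f e c J x ∧
        (∀ i, x i + x (i + (f : ZMod (2 * f))) = (e : ℤ)) ∧
        Psi p f c J x ≡ t [ZMOD ((p : ℤ) ^ (2 * f) - 1)] := by
  haveI : NeZero (2 * f) := ⟨by omega⟩
  have hp2 : 2 ≤ p := hp.two_le
  have hp2' : (2:ℤ) ≤ (p:ℤ) := by exact_mod_cast hp2
  have hq1 : (1:ℤ) ≤ (p:ℤ)^f := by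
    have h := Nat.one_le_pow f p (by omega)
    exact_mod_cast h
  have hqne : ((p:ℤ)^f + 1) ≠ 0 := by linarith
  have hMfact : (p:ℤ)^(2*f) - 1 = ((p:ℤ)^f + 1) * ((p:ℤ)^f - 1) := by
    rw [two_mul, pow_add]; ring
  set T : ℤ := ∑ i ∈ Finset.range f, (p:ℤ)^(i+1) with hT
  -- Step 1: extract m
  have h6 : (((p:ℤ)^f+1) * ((p:ℤ)^f-1)) ∣
      (((p:ℤ)^f+1) * (t - ((e:ℤ)*T + Cconst p f c))) := by
    rw [← hMfact]
    have h7 := Int.ModEq.dvd ht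
    have h8 : ((p:ℤ)^f+1) * (t - ((e:ℤ)*T + Cconst p f c))
        = -(((e:ℤ) * (∑ j ∈ Finset.Icc 1 (2*f), (p:ℤ)^j) + ((p:ℤ)^f+1) * Cconst p f c)
            - ((p:ℤ)^f+1) * t) := by
      rw [Ssum_s8 p f, ← hT]; ring
    rw [h8]
    exact dvd_neg.2 h7
  obtain ⟨m, hm⟩ := (mul_dvd_mul_iff_left hqne).1 h6
  -- the nonvanishing W
  set a : ℕ → ℤ := fun i => c (((i:ℕ) : ZMod (2*f)) + (f : ZMod (2*f))) - c ((i:ℕ) : ZMod (2*f))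
    with hadef
  set b : ℕ → ℤ := fun j => a (f - 1 - j) with hbdef
  set W : ℤ := ∑ j ∈ Finset.range f, (p:ℤ)^j * b j with hWdef
  have ha_all : ∀ i : ℕ, |a i| ≤ (p:ℤ) - 1 := by
    intro i
    have h1 := hc (((i:ℕ) : ZMod (2*f)) + (f : ZMod (2*f)))
    have h2 := hc ((i:ℕ) : ZMod (2*f))
    rw [hadef]
    rw [abs_le]
    constructor <;> simp only [] <;> linarith [h1.1, h1.2, h2.1, h2.2]
  have hWb : |W| ≤ (p:ℤ)^f - 1 := by
    have : ((p:ℤ))^f - 1 = ((p:ℤ))^f - 1 := rfl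
    exact aux_bound p hp2 f b (fun i _ => ha_all _)
  -- W ≠ 0
  obtain ⟨i₀, hi₀⟩ := hne
  have hcast0 : ((i₀.val : ℕ) : ZMod (2*f)) = i₀ := ZMod.natCast_rightInverse i₀
  have hex : ∃ i₁ : ℕ, i₁ < f ∧ a i₁ ≠ 0 := by
    have hval0 : i₀.val < 2*f := ZMod.val_lt i₀
    by_cases h : i₀.val < f
    · refine ⟨i₀.val, h, ?_⟩
      rw [hadef]
      simp only []
      rw [hcast0]
      exact sub_ne_zero.2 (Ne.symm hi₀)
    · refine ⟨i₀.val - f, by omega, ?_⟩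
      have h1 : (((i₀.val - f : ℕ)) : ZMod (2*f)) + (f : ZMod (2*f)) = i₀ := by
        rw [← Nat.cast_add]
        have h5 : i₀.val - f + f = i₀.val := by omega
        rw [h5, hcast0]
      have h2 : (((i₀.val - f : ℕ)) : ZMod (2*f)) = i₀ + (f : ZMod (2*f)) := by
        calc (((i₀.val - f : ℕ)) : ZMod (2*f))
            = (((i₀.val - f : ℕ)) : ZMod (2*f)) + (f : ZMod (2*f)) + (f : ZMod (2*f)) := by
              rw [add_assoc, hidx2f, add_zero]
          _ = i₀ + (f : ZMod (2*f)) := by rw [h1]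
      rw [hadef]
      simp only []
      rw [h1, h2]
      exact sub_ne_zero.2 hi₀
  obtain ⟨i₁, hi₁f, hi₁⟩ := hex
  have hW0 : W ≠ 0 := by
    intro h0
    have := aux_nonzero p hp2 f b (fun i _ => ha_all _) (hWdef ▸ h0) (f - 1 - i₁) (by omega)
    rw [hbdef] at this
    simp only [] at this
    have heq : f - 1 - (f - 1 - i₁) = i₁ := by omega
    rw [heq] at this
    exact hi₁ this
  -- W alternative form and hCV
  set A : ℤ := ∑ i ∈ Finset.range f, (p:ℤ)^(f-i) * c (((i:ℕ) : ZMod (2*f)) + (f : ZMod (2*f)))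
    with hA
  set B : ℤ := ∑ i ∈ Finset.range f, (p:ℤ)^(f-i) * c ((i:ℕ) : ZMod (2*f)) with hB
  have hd1 : Cconst p f c = (p:ℤ)^f * B + A := Cdecomp p f c
  have hWalt : W = ∑ i ∈ Finset.range f, (p:ℤ)^(f-1-i) * a i := by
    rw [hWdef, ← Finset.sum_range_reflect (fun j => (p:ℤ)^(f-1-j) * a j) f]
    refine Finset.sum_congr rfl fun j hj => ?_
    have hj' := Finset.mem_range.1 hj
    have heq : f - 1 - (f - 1 - j) = j := by omega
    rw [heq, hbdef]
  have e6 : (p:ℤ) * W = A - B := by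
    rw [hWalt, Finset.mul_sum, hA, hB, ← Finset.sum_sub_distrib]
    refine Finset.sum_congr rfl fun i hi => ?_
    have hi' := Finset.mem_range.1 hi
    have heq : f - i = (f - 1 - i) + 1 := by omega
    rw [hadef, heq, pow_succ]
    simp only []
    ring
  have hnotC : ¬ ((p:ℤ)^f + 1) ∣ Cconst p f c := by
    intro h
    have hCV : ((p:ℤ)^f + 1) ∣ (Cconst p f c - (p:ℤ)*W) := ⟨B, by rw [hd1, e6]; ring⟩
    have h2 : ((p:ℤ)^f + 1) ∣ ((p:ℤ)*W) := by
      have h3 := dvd_sub h hCV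
      have h4 : Cconst p f c - (Cconst p f c - (p:ℤ)*W) = (p:ℤ)*W := by ring
      rwa [h4] at h3
    exact aux_not_dvd p f hp2 hf W hW0 hWb h2
  -- case split
  have hm : t = (e:ℤ)*T + Cconst p f c + ((p:ℤ)^f - 1) * m := by linarith [hm]
  by_cases hcase : ((p:ℤ)^f + 1) ∣ (m + p)
  · -- J = ∅
    have hr : ¬ ((p:ℤ)^f + 1) ∣ ((m - Cconst p f c) + p) := by
      intro h
      apply hnotC
      have h3 := dvd_sub hcase h
      have h4 : (m + (p:ℤ)) - ((m - Cconst p f c) + p) = Cconst p f c := by ring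
      rwa [h4] at h3
    obtain ⟨N, hNlt, hNd⟩ := aux_findN p f hp2 hf (m - Cconst p f c) hr
    obtain ⟨k, hk⟩ := hNd
    refine ⟨∅, by simp, digitx p f e N, ?_, fun i => digitx_pair p f e N hf i, ?_⟩
    · intro i
      refine ⟨(digitx_bounds p f e N (by omega) he i).1,
        (digitx_bounds p f e N (by omega) he i).2, ?_, ?_⟩
      · intro h1; exact absurd h1 (Finset.notMem_empty i)
      · intro _ h2; exact absurd h2 (Finset.notMem_empty _)
    · have hPsi : Psi p f c ∅ (digitx p f e N)
          = (∑ i ∈ Finset.range (2*f),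
              (p:ℤ)^(2*f-i) * c (((i:ℕ) : ZMod (2*f)) + (f : ZMod (2*f))))
            + ((e:ℤ) * T + ((p:ℤ)^f - 1) * ((p:ℤ) * N)) := by
        unfold Psi
        rw [digitx_sum p f e N (by omega) hf hNlt, ← hT]
        exact congrArg₂ (· + ·)
          (Finset.sum_congr rfl fun i _ => if_neg (Finset.notMem_empty _)) rfl
      have hd2 : (∑ i ∈ Finset.range (2*f),
          (p:ℤ)^(2*f-i) * c (((i:ℕ) : ZMod (2*f)) + (f : ZMod (2*f))))
          = (p:ℤ)^f * A + B := Cdecomp' p f c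
      rw [Int.modEq_iff_dvd, hMfact]
      refine ⟨B - k, ?_⟩
      rw [hm, hPsi]
      linear_combination (-((p:ℤ)^f - 1)) * hk + ((p:ℤ)^f) * hd1 - hd2
  · -- J = univ
    obtain ⟨N, hNlt, hNd⟩ := aux_findN p f hp2 hf m hcase
    obtain ⟨k, hk⟩ := hNd
    refine ⟨Finset.univ, by simp, digitx p f e N, ?_, fun i => digitx_pair p f e N hf i, ?_⟩
    · intro i
      refine ⟨(digitx_bounds p f e N (by omega) he i).1,
        (digitx_bounds p f e N (by omega) he i).2, ?_, ?_⟩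
      · intro _ h2; exact absurd (Finset.mem_univ _) h2
      · intro h1; exact absurd (Finset.mem_univ i) h1
    · have hPsi : Psi p f c Finset.univ (digitx p f e N)
          = Cconst p f c + ((e:ℤ) * T + ((p:ℤ)^f - 1) * ((p:ℤ) * N)) := by
        unfold Psi
        rw [digitx_sum p f e N (by omega) hf hNlt, ← hT]
        exact congrArg₂ (· + ·)
          (Finset.sum_congr rfl fun i _ => if_pos (Finset.mem_univ _)) rfl
      rw [Int.modEq_iff_dvd, hMfact]
      refine ⟨-k, ?_⟩
      rw [hm, hPsi]
      linear_combination (-((p:ℤ)^f - 1)) * hk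
end

section
/- Let e ≥ 1, f ≥ 1, and p be integers with e < p − 1. Suppose y_0, …, y_{f−1} are integers with 0 ≤ y_i ≤ 2e for all i, and Σ_{i=0}^{f−1} p^{f−1−i}(y_i − e) ≡ 0 (mod p^f − 1). Then y_i = e for all i. -/
open Finset in
private lemma stmt9_aux (p e : ℤ) (hp : 0 < p) (hep : e < p) :
    ∀ f : ℕ, ∀ x : ℕ → ℤ, (∀ i < f, |x i| ≤ e) →
    (∑ i ∈ Finset.range f, p ^ (f - 1 - i) * x i = 0) → ∀ i < f, x i = 0 := by
  intro f
  induction f with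
  | zero => intro x _ _ i hi; omega
  | succ f ih =>
    intro x hx hsum i hi
    have hsplit : ∑ i ∈ Finset.range (f+1), p ^ (f + 1 - 1 - i) * x i
        = p * (∑ i ∈ Finset.range f, p ^ (f - 1 - i) * x i) + x f := by
      rw [Finset.sum_range_succ, Finset.mul_sum]
      congr 1
      · apply Finset.sum_congr rfl
        intro j hj
        have hj' : j < f := Finset.mem_range.mp hj
        have : f + 1 - 1 - j = (f - 1 - j) + 1 := by omega
        rw [this, pow_succ]
        ring
      · simp
    rw [hsplit] at hsum
    have hdvd : p ∣ x f := ⟨-(∑ i ∈ Finset.range f, p ^ (f - 1 - i) * x i), by linarith⟩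
    have hxf : x f = 0 := by
      have := hx f (by omega)
      rcases hdvd with ⟨c, hc⟩
      have : |p * c| ≤ e := by rwa [← hc]
      rw [abs_mul, abs_of_pos hp] at this
      have hc0 : c = 0 := by nlinarith [abs_nonneg c, le_abs_self c, neg_abs_le c]
      simp [hc, hc0]
    have hsum' : ∑ i ∈ Finset.range f, p ^ (f - 1 - i) * x i = 0 := by
      have hp0 : p ≠ 0 := by omega
      have : p * (∑ i ∈ Finset.range f, p ^ (f - 1 - i) * x i) = 0 := by
        rw [hxf] at hsum; linarith
      exact (mul_eq_zero.mp this).resolve_left hp0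
    rcases Nat.lt_succ_iff_lt_or_eq.mp hi with h | h
    · exact ih x (fun j hj => hx j (by omega)) hsum' i h
    · rw [h]; exact hxf

/-- if `e < p − 1`, `0 ≤ y_i ≤ 2e` for all `i < f`, and
`Σ_{i<f} p^{f−1−i}(y_i − e) ≡ 0 (mod p^f − 1)`, then `y_i = e` for all `i < f`. -/
theorem stmt_9 (p e : ℤ) (f : ℕ) (he : 1 ≤ e) (hf : 1 ≤ f) (hpe : e < p - 1)
    (y : ℕ → ℤ) (hy : ∀ i < f, 0 ≤ y i ∧ y i ≤ 2 * e)
    (hdvd : (p ^ f - 1) ∣ ∑ i ∈ Finset.range f, p ^ (f - 1 - i) * (y i - e)) :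
    ∀ i < f, y i = e := by
  have hp : 3 ≤ p := by omega
  have hp0 : (0:ℤ) < p := by omega
  set S := ∑ i ∈ Finset.range f, p ^ (f - 1 - i) * (y i - e) with hS
  have habs : ∀ i < f, |y i - e| ≤ e := by
    intro i hi
    have := hy i hi
    rw [abs_le]; omega
  -- bound |S|
  have hbound : |S| ≤ e * ∑ i ∈ Finset.range f, p ^ i := by
    calc |S| ≤ ∑ i ∈ Finset.range f, |p ^ (f - 1 - i) * (y i - e)| :=
          Finset.abs_sum_le_sum_abs _ _
      _ ≤ ∑ i ∈ Finset.range f, p ^ (f - 1 - i) * e := by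
          apply Finset.sum_le_sum
          intro i hi
          rw [abs_mul, abs_pow, abs_of_pos hp0]
          exact mul_le_mul_of_nonneg_left (habs i (Finset.mem_range.mp hi)) (by positivity)
      _ = e * ∑ i ∈ Finset.range f, p ^ (f - 1 - i) := by rw [Finset.mul_sum]; exact Finset.sum_congr rfl fun i _ => mul_comm _ _
      _ = e * ∑ i ∈ Finset.range f, p ^ i := by
          congr 1
          rw [← Finset.sum_range_reflect]
          apply Finset.sum_congr rfl
          intro i hi
          congr 1
          have := Finset.mem_range.mp hi
          omega
  have hgeom : (p - 1) * ∑ i ∈ Finset.range f, p ^ i = p ^ f - 1 := by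
    have := geom_sum_mul p f
    linarith
  have hsumpos : 1 ≤ ∑ i ∈ Finset.range f, p ^ i := by
    calc (1:ℤ) = ∑ i ∈ Finset.range 1, p ^ i := by simp
      _ ≤ _ := by
        apply Finset.sum_le_sum_of_subset_of_nonneg
        · exact Finset.range_subset_range.mpr hf
        · intro i _ _; positivity
  have hlt : |S| < p ^ f - 1 := by
    have h1 : e * ∑ i ∈ Finset.range f, p ^ i ≤ (p - 2) * ∑ i ∈ Finset.range f, p ^ i := by
      apply mul_le_mul_of_nonneg_right (by omega) (by linarith)
    nlinarith
  have hS0 : S = 0 := Int.eq_zero_of_abs_lt_dvd hdvd hlt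
  intro i hi
  have h0 : y i - e = 0 := stmt9_aux p e hp0 (by omega) f (fun j => y j - e) habs hS0 i hi
  linarith
end

section
/- Let p ≥ 2 and f ≥ 1 be integers, and let y_i (i ∈ ℤ/fℤ) be integers. Then Σ_{i=0}^{f−1} p^{f−1−i} y_i ≡ 0 (mod p^f − 1) if and only if there exist integers a_i (i ∈ ℤ/fℤ) with y_i = p·a_i − a_{i+1} for all i (indices modulo f). -/
/-!
The sum `∑_{i<f} p^{f-1-i} y_i` is the Horner evaluation at `p` of the digits `y_i`. If
`y_i = p a_i - a_{i+1}` it telescopes to `p^f a_0 - a_f = (p^f - 1) a_0`. Conversely, if it equals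
`(p^f - 1) t`, the sequence `b_k = p^k t - ∑_{i<k} p^{k-1-i} y_i` satisfies `p b_k - b_{k+1} = y_k`
and `b_f = b_0`, so `b` is `f`-periodic and descends to `ℤ/fℤ`.
-/

open Finset

section Horner

variable {R : Type*} [CommRing R]

/-- The digits `z_0, …, z_{n-1}` read in base `p`, with `z_0` the most significant. -/
def hornerSum (p : R) (z : ℕ → R) (n : ℕ) : R :=
  ∑ i ∈ range n, p ^ (n - 1 - i) * z i

@[simp]
lemma hornerSum_zero (p : R) (z : ℕ → R) : hornerSum p z 0 = 0 := by
  simp [hornerSum]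

lemma hornerSum_succ (p : R) (z : ℕ → R) (n : ℕ) :
    hornerSum p z (n + 1) = p * hornerSum p z n + z n := by
  rw [hornerSum, hornerSum, sum_range_succ, mul_sum, Nat.add_sub_cancel, Nat.sub_self, pow_zero,
    one_mul]
  congr 1
  refine sum_congr rfl fun i hi => ?_
  have hi : i < n := mem_range.mp hi
  rw [← mul_assoc, ← pow_succ']
  congr 2
  omega

lemma hornerSum_mul_sub_succ (p : R) (a : ℕ → R) (n : ℕ) :
    hornerSum p (fun i => p * a i - a (i + 1)) n = p ^ n * a 0 - a n := by
  induction n with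
  | zero => simp
  | succ n ih => rw [hornerSum_succ, ih]; ring

def hornerRemainder (p : R) (z : ℕ → R) (t : R) (k : ℕ) : R :=
  p ^ k * t - hornerSum p z k

lemma mul_hornerRemainder_sub_succ (p : R) (z : ℕ → R) (t : R) (k : ℕ) :
    p * hornerRemainder p z t k - hornerRemainder p z t (k + 1) = z k := by
  rw [hornerRemainder, hornerRemainder, hornerSum_succ]
  ring

lemma hornerRemainder_eq_hornerRemainder_zero {p : R} {z : ℕ → R} {t : R} {n : ℕ}
    (h : hornerSum p z n = (p ^ n - 1) * t) :
    hornerRemainder p z t n = hornerRemainder p z t 0 := by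
  rw [hornerRemainder, hornerRemainder, h, hornerSum_zero]
  ring

end Horner

lemma Function.Periodic.of_mul_sub_succ {R : Type*} [CommRing R] {p : R} {z b : ℕ → R} {f : ℕ}
    (hz : Function.Periodic z f) (hb : ∀ k, p * b k - b (k + 1) = z k) (hf : b f = b 0) :
    Function.Periodic b f := by
  intro k
  induction k with
  | zero => simpa using hf
  | succ k ih =>
    rw [Nat.add_right_comm]
    linear_combination hb k - hb (k + f) + p * ih - hz k

theorem dvd_hornerSum_iff {R : Type*} [CommRing R] {f : ℕ} [NeZero f] (p : R)
    (y : ZMod f → R) :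
    p ^ f - 1 ∣ hornerSum p (fun i => y i) f ↔ ∃ a : ZMod f → R, ∀ i, y i = p * a i - a (i + 1) := by
  constructor
  · rintro ⟨t, ht⟩
    set b := hornerRemainder p (fun i => y i) t
    have hb := mul_hornerRemainder_sub_succ p (fun i => y (i : ZMod f)) t
    have hper : Function.Periodic b f :=
      .of_mul_sub_succ (fun k => by simp) hb (hornerRemainder_eq_hornerRemainder_zero ht)
    refine ⟨fun j => b j.val, fun i => ?_⟩
    have hsucc : (i + 1).val = (i.val + 1) % f := by
      rw [← ZMod.val_natCast, Nat.cast_succ, ZMod.natCast_zmod_val]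
    dsimp only
    rw [hsucc, hper.map_mod_nat, hb, ZMod.natCast_zmod_val]
  · rintro ⟨a, ha⟩
    refine ⟨a 0, ?_⟩
    have hy : (fun i : ℕ => y i) = fun i : ℕ => p * a i - a ((i + 1 : ℕ) : ZMod f) := by
      funext i
      rw [ha, Nat.cast_succ]
    rw [hy, hornerSum_mul_sub_succ (a := fun i : ℕ => a i), ZMod.natCast_self, Nat.cast_zero]
    ring

theorem stmt_10_general (p f : ℕ) (hf : 1 ≤ f) (y : ZMod f → ℤ) :
    (((p : ℤ) ^ f - 1) ∣ ∑ i ∈ Finset.range f, (p : ℤ) ^ (f - 1 - i) * y (i : ZMod f)) ↔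
    ∃ a : ZMod f → ℤ, ∀ i : ZMod f, y i = (p : ℤ) * a i - a (i + 1) := by
  have : NeZero f := ⟨by omega⟩
  exact dvd_hornerSum_iff (p : ℤ) y

/-- `Σ_{i<f} p^{f−1−i} y_i ≡ 0 (mod p^f − 1)` iff there are integers `a_i`
(indices mod `f`) with `y_i = p·a_i − a_{i+1}` for all `i`. -/
theorem stmt_10 (p f : ℕ) (hp : 2 ≤ p) (hf : 1 ≤ f) (y : ZMod f → ℤ) :
    (((p : ℤ) ^ f - 1) ∣ ∑ i ∈ Finset.range f, (p : ℤ) ^ (f - 1 - i) * y (i : ZMod f)) ↔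
    ∃ a : ZMod f → ℤ, ∀ i : ZMod f, y i = (p : ℤ) * a i - a (i + 1) :=
  stmt_10_general p f hf y
end

section
/- Let p ≥ 2 and f ≥ 1 be integers, and let a_i (i ∈ ℤ/fℤ) be integers satisfying |p·a_i − a_{i+1}| ≤ 2p−3 for all i (indices modulo f). Then a_i ∈ {−1, 0, 1} for all i. -/
/-! Evaluate the hypothesis at an index `j` where `|a j|` is largest: then
`|c| |a j| ≤ |c a j - a (s j)| + |a (s j)| ≤ B + |a j|`, so `(|c| - 1) |a j| ≤ B`.
For `c = p` and `B = 2p - 3 < 2 (p - 1)` this forces `|a i| ≤ 1`. -/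

theorem sub_one_mul_abs_le_of_abs_mul_sub_le {ι R : Type*} [Finite ι] [Ring R] [LinearOrder R]
    [IsStrictOrderedRing R] (s : ι → ι) (a : ι → R) (c B : R) (hc : 1 ≤ |c|)
    (h : ∀ i, |c * a i - a (s i)| ≤ B) (i : ι) : (|c| - 1) * |a i| ≤ B := by
  have : Nonempty ι := ⟨i⟩
  obtain ⟨j, hj⟩ := Finite.exists_max fun k => |a k|
  have hmax : |c| * |a j| ≤ B + |a j| :=
    calc |c| * |a j| = |c * a j - a (s j) + a (s j)| := by rw [sub_add_cancel, abs_mul]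
      _ ≤ |c * a j - a (s j)| + |a (s j)| := abs_add_le _ _
      _ ≤ B + |a j| := add_le_add (h j) (hj (s j))
  calc (|c| - 1) * |a i| ≤ (|c| - 1) * |a j| := mul_le_mul_of_nonneg_left (hj i) (sub_nonneg.2 hc)
    _ ≤ B := by rwa [sub_one_mul, sub_le_iff_le_add]

/-- if integers `a_i` (indices mod `f`) satisfy `|p·a_i − a_{i+1}| ≤ 2p−3`
for all `i`, then every `a_i` is `−1`, `0`, or `1`. -/
theorem stmt_11 (p f : ℕ) (hp : 2 ≤ p) (hf : 1 ≤ f) (a : ZMod f → ℤ)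
    (ha : ∀ i : ZMod f, |(p : ℤ) * a i - a (i + 1)| ≤ 2 * (p : ℤ) - 3) :
    ∀ i : ZMod f, a i = -1 ∨ a i = 0 ∨ a i = 1 := by
  have : NeZero f := ⟨by omega⟩
  intro i
  have hp' : (2 : ℤ) ≤ p := by exact_mod_cast hp
  have hbound := sub_one_mul_abs_le_of_abs_mul_sub_le (· + 1) a (p : ℤ) _
    (by rw [Nat.abs_cast]; omega) ha i
  rw [Nat.abs_cast] at hbound
  have hai : |a i| ≤ 1 := by nlinarith [abs_nonneg (a i)]
  have := abs_le.mp hai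
  omega
end

section
/- Let p be an odd prime and f ≥ 1, e ≥ 1 integers, and let c_0, …, c_{2f−1} be integers with 0 ≤ c_i ≤ p−1 (indices modulo 2f). Take J = ℤ/2fℤ (the full set) and let x_0, …, x_{2f−1} be integers satisfying x_{i+f} = e − x_i for 0 ≤ i ≤ f−1. Then Ψ(J,x) ≡ C + e·(p + p^2 + ⋯ + p^{f}) + p(p^f−1)·X (mod p^{2f}−1), where X := Σ_{i=0}^{f−1} p^{f−1−i} x_i. In particular, the residue of Ψ(J,x) modulo p^{2f}−1 depends only on X modulo p^f+1. -/
/-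
With `J` full, `Ψ(J,x) = C + Σ_{i<2f} p^{2f-i} x_i`. Splitting this sum at `i = f` and using
`x_{i+f} = e - x_i` turns it into `p^{f+1} X + e(p + ⋯ + p^f) - p X`. Since
`p^{2f} - 1 = (p^f - 1)(p^f + 1)`, the term `p(p^f - 1) X` modulo `p^{2f} - 1` only sees
`X` modulo `p^f + 1`.
-/

open Finset

theorem sum_Icc_one_pow_eq_mul_sum_range (p : ℤ) (f : ℕ) :
    ∑ j ∈ Icc 1 f, p ^ j = p * ∑ i ∈ range f, p ^ (f - 1 - i) := by
  rw [sum_range_reflect (fun i => p ^ i) f, mul_sum, ← Finset.Ico_add_one_right_eq_Icc,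
    sum_Ico_eq_sum_range]
  simp only [add_tsub_cancel_right, pow_succ', add_comm 1]

theorem sum_range_two_mul_pow_sub_mul (p : ℤ) (f : ℕ) (x : ZMod (2 * f) → ℤ) :
    ∑ i ∈ range (2 * f), p ^ (2 * f - i) * x i =
      p ^ (f + 1) * ∑ i ∈ range f, p ^ (f - 1 - i) * x i +
        p * ∑ i ∈ range f, p ^ (f - 1 - i) * x ((i : ZMod (2 * f)) + f) := by
  rw [show range (2 * f) = range (f + f) by rw [two_mul], sum_range_add, mul_sum, mul_sum]
  congr 1 <;> refine sum_congr rfl fun i hi => ?_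
  · rw [← mul_assoc, ← pow_add]
    congr 2
    grind
  · rw [← mul_assoc, ← pow_succ', Nat.cast_add, add_comm _ (i : ZMod (2 * f))]
    congr 2
    grind

theorem Psi_of_forall_mem (p f : ℕ) (c : ZMod (2 * f) → ℤ) {J : Finset (ZMod (2 * f))}
    (hJ : ∀ i, i ∈ J) (x : ZMod (2 * f) → ℤ) :
    Psi p f c J x = Cconst p f c + ∑ i ∈ range (2 * f), (p : ℤ) ^ (2 * f - i) * x i := by
  simp only [Psi, Cconst, hJ, if_true]

theorem Psi_of_forall_mem_of_add_eq (p f e : ℕ) (c : ZMod (2 * f) → ℤ)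
    {J : Finset (ZMod (2 * f))} (hJ : ∀ i, i ∈ J) (x : ZMod (2 * f) → ℤ)
    (hx : ∀ i < f, x ((i : ZMod (2 * f)) + f) = e - x i) :
    Psi p f c J x =
      Cconst p f c + e * ∑ j ∈ Icc 1 f, (p : ℤ) ^ j +
        p * ((p : ℤ) ^ f - 1) * ∑ i ∈ range f, (p : ℤ) ^ (f - 1 - i) * x i := by
  have hsecond : ∑ i ∈ range f, (p : ℤ) ^ (f - 1 - i) * x ((i : ZMod (2 * f)) + f) =
      e * ∑ i ∈ range f, (p : ℤ) ^ (f - 1 - i) - ∑ i ∈ range f, (p : ℤ) ^ (f - 1 - i) * x i := by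
    rw [mul_sum, ← sum_sub_distrib]
    exact sum_congr rfl fun i hi => by rw [hx i (mem_range.1 hi)]; ring
  rw [Psi_of_forall_mem p f c hJ, sum_range_two_mul_pow_sub_mul, hsecond,
    sum_Icc_one_pow_eq_mul_sum_range]
  ring

theorem Int.ModEq.mul_sub_one_of_modEq_add_one {q a b : ℤ} (m : ℤ) (h : a ≡ b [ZMOD q + 1]) :
    m * (q - 1) * a ≡ m * (q - 1) * b [ZMOD q ^ 2 - 1] := by
  rw [show q ^ 2 - 1 = (q - 1) * (q + 1) by ring, mul_assoc, mul_assoc]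
  exact (h.mul_left' (c := q - 1)).mul_left m

theorem stmt_13_general (p f e : ℕ)
    (c : ZMod (2 * f) → ℤ)
    (J : Finset (ZMod (2 * f))) (hJ : ∀ i, i ∈ J)
    (x : ZMod (2 * f) → ℤ)
    (hx : ∀ i < f, x ((i : ZMod (2 * f)) + (f : ZMod (2 * f))) = (e : ℤ) - x (i : ZMod (2 * f))) :
    (Psi p f c J x ≡
      Cconst p f c + (e : ℤ) * (∑ j ∈ Finset.Icc 1 f, (p : ℤ) ^ j) +
        (p : ℤ) * ((p : ℤ) ^ f - 1) *
          (∑ i ∈ Finset.range f, (p : ℤ) ^ (f - 1 - i) * x (i : ZMod (2 * f)))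
      [ZMOD ((p : ℤ) ^ (2 * f) - 1)]) ∧
    ∀ x' : ZMod (2 * f) → ℤ,
      (∀ i < f, x' ((i : ZMod (2 * f)) + (f : ZMod (2 * f))) = (e : ℤ) - x' (i : ZMod (2 * f))) →
      (∑ i ∈ Finset.range f, (p : ℤ) ^ (f - 1 - i) * x' (i : ZMod (2 * f))) ≡
        (∑ i ∈ Finset.range f, (p : ℤ) ^ (f - 1 - i) * x (i : ZMod (2 * f)))
        [ZMOD ((p : ℤ) ^ f + 1)] →
      Psi p f c J x' ≡ Psi p f c J x [ZMOD ((p : ℤ) ^ (2 * f) - 1)] := by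
  have hPsi := Psi_of_forall_mem_of_add_eq p f e c hJ
  refine ⟨(hPsi x hx).symm ▸ Int.ModEq.refl _, fun x' hx' hX => ?_⟩
  rw [hPsi x hx, hPsi x' hx', pow_mul']
  exact (hX.mul_sub_one_of_modEq_add_one _).add_left _

/-- with `J` the full subset of `ℤ/2fℤ` and `x_{i+f} = e − x_i` for
`0 ≤ i ≤ f−1`, one has `Ψ(J,x) ≡ C + e(p + ⋯ + p^f) + p(p^f−1)X (mod p^{2f}−1)` where
`X := Σ_{i<f} p^{f−1−i} x_i`; in particular the residue of `Ψ(J,x)` mod `p^{2f}−1`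
depends only on `X` mod `p^f+1`. -/
theorem stmt_13 (p f e : ℕ) (hp : p.Prime) (hodd : Odd p) (hf : 1 ≤ f) (he : 1 ≤ e)
    (c : ZMod (2 * f) → ℤ) (hc : ∀ i, 0 ≤ c i ∧ c i ≤ (p : ℤ) - 1)
    (J : Finset (ZMod (2 * f))) (hJ : ∀ i, i ∈ J)
    (x : ZMod (2 * f) → ℤ)
    (hx : ∀ i < f, x ((i : ZMod (2 * f)) + (f : ZMod (2 * f))) = (e : ℤ) - x (i : ZMod (2 * f))) :
    (Psi p f c J x ≡
      Cconst p f c + (e : ℤ) * (∑ j ∈ Finset.Icc 1 f, (p : ℤ) ^ j) +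
        (p : ℤ) * ((p : ℤ) ^ f - 1) *
          (∑ i ∈ Finset.range f, (p : ℤ) ^ (f - 1 - i) * x (i : ZMod (2 * f)))
      [ZMOD ((p : ℤ) ^ (2 * f) - 1)]) ∧
    ∀ x' : ZMod (2 * f) → ℤ,
      (∀ i < f, x' ((i : ZMod (2 * f)) + (f : ZMod (2 * f))) = (e : ℤ) - x' (i : ZMod (2 * f))) →
      (∑ i ∈ Finset.range f, (p : ℤ) ^ (f - 1 - i) * x' (i : ZMod (2 * f))) ≡
        (∑ i ∈ Finset.range f, (p : ℤ) ^ (f - 1 - i) * x (i : ZMod (2 * f)))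
        [ZMOD ((p : ℤ) ^ f + 1)] →
      Psi p f c J x' ≡ Psi p f c J x [ZMOD ((p : ℤ) ^ (2 * f) - 1)] :=
  stmt_13_general p f e c J hJ x hx
end
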